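/- arXiv:2505.07518 — 2 statements merged into one kernel-verified Lean document; each statement's English description precedes it below -/
import Mathlib

section
/- For every field extension F/C there is a minimum element, with respect to inclusion, of the set Sep(F/C) := {D : D is a subfield of F, C ⊆ D, and F/D is separable}; that is, there exists a subfield Λ_F C of F with C ⊆ Λ_F C, F/Λ_F C separable, and Λ_F C ⊆ D for every subfield D of F such that C ⊆ D and F/D is separable. -/
open scoped Classical

namespace SepPaper

variable {F : Type*} [Field F]

/-- The image of a set under `x ↦ x ^ p`. -/
def pPow (p : ℕ) (S : Set F) : Set F := (fun x => x ^ p) '' S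

/-- `F^(p)`: the set of all `p`-th powers of the field `F`. -/
def pPowers (p : ℕ) (F : Type*) [Field F] : Set F := Set.range fun x : F => x ^ p

/-- `F^(p)C(S)`: the subfield of `F` generated by all `p`-th powers together with the
sets `C` and `S`. -/
def pSpan (p : ℕ) (C S : Set F) : Subfield F :=
  Subfield.closure (pPowers p F ∪ C ∪ S)

/-- `A` is `p`-independent in `F` over `C`: no `a ∈ A` lies in `F^(p)C(A \ {a})`. -/
def PIndep (p : ℕ) (C A : Set F) : Prop :=
  ∀ a ∈ A, a ∉ pSpan p C (A \ {a})

/-- `A` is a `p`-basis of `F` over `C`: `p`-independent and `p`-spanning over `C`. -/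
def PBasis (p : ℕ) (C A : Set F) : Prop :=
  PIndep p C A ∧ pSpan p C A = ⊤

/-- `A` is a `p`-basis over `C` of the subfield of `F` with carrier `E`:
`A ⊆ E`, `A` is `p`-independent in `E` over `C`, and `E = E^(p)C(A)`. -/
def PBasisOfSet (p : ℕ) (E C A : Set F) : Prop :=
  A ⊆ E ∧ (∀ x ∈ A, x ∉ Subfield.closure (pPow p E ∪ C ∪ (A \ {x}))) ∧
    E ⊆ ↑(Subfield.closure (pPow p E ∪ C ∪ A))

/-- `l` represents the (finitely supported) family `(λ^B_I(a))_{I ∈ p^{[|B|]}}`: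
all multi-indices in the support have entries `< p`, and
`a = Σ_I B^I · (l I)^p`. -/
def IsLambdaFam (p : ℕ) (B : Set F) (a : F) (l : (↥B →₀ ℕ) →₀ F) : Prop :=
  (∀ I ∈ l.support, ∀ t : ↥B, I t < p) ∧
    a = l.sum fun I y => (I.prod fun t k => (t : F) ^ k) * y ^ p

/-- The family of parameterized lambda functions `I ↦ λ^B_I(a)`
(defined to be `0` when no defining family exists; when `B` is `p`-independent and
`a ∈ F^(p)(B)` the defining family exists and is unique). -/
noncomputable def lambdaFam (p : ℕ) (B : Set F) (a : F) : (↥B →₀ ℕ) → F :=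
  if h : ∃ l, IsLambdaFam p B a l then ⇑h.choose else 0

/-- `λ^B(a)` for a single element `a`: the set of values `λ^B_I(a)`, `I ∈ p^{[|B|]}`. -/
def lambdaVals (p : ℕ) (B : Set F) (a : F) : Set F :=
  {y | ∃ I : ↥B →₀ ℕ, (∀ t, I t < p) ∧ y = lambdaFam p B a I}

/-- `λ^B(A)` for a set `A`: all values `λ^B_I(a)` for `a ∈ A ∩ F^(p)(B)`. -/
def lambdaSet (p : ℕ) (B A : Set F) : Set F :=
  {y | ∃ a ∈ A ∩ (pSpan p ∅ B : Set F), y ∈ lambdaVals p B a}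

/-- `E/C` is separable (with `p` the characteristic exponent): every `C`-linearly
independent tuple of elements of `E` has `C`-linearly independent `p`-th powers.
This is MacLane's criterion, equivalent to `E` being linearly disjoint from
`C^{(p^{-1})}` over `C` inside an algebraic closure. Here `C` and `E` are the carrier
sets of subfields of the ambient field. -/
def SepExt (p : ℕ) (C E : Set F) : Prop :=
  ∀ (n : ℕ) (x : Fin n → F), (∀ i, x i ∈ E) →
    (∀ d : Fin n → F, (∀ i, d i ∈ C) → (∑ i, d i * x i) = 0 → ∀ i, d i = 0) →
    ∀ d : Fin n → F, (∀ i, d i ∈ C) → (∑ i, d i * x i ^ p) = 0 → ∀ i, d i = 0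

/-- `E/C` is separated: separable and `E = E^(p)C`. -/
def SeparatedExt (p : ℕ) (C E : Set F) : Prop :=
  SepExt p C E ∧ E = ↑(Subfield.closure (pPow p E ∪ C))

/-- `D` is the Lambda closure `Λ_F C` of `C` in `F`: the minimum subfield of `F`
containing `C` such that `F/D` is separable. -/
def IsLambdaClosure (p : ℕ) (C : Set F) (D : Subfield F) : Prop :=
  C ⊆ ↑D ∧ SepExt p (↑D) (Set.univ : Set F) ∧
    ∀ D' : Subfield F, C ⊆ ↑D' → SepExt p (↑D') (Set.univ : Set F) → D ≤ D'

/-- `Λ^1_F C`: the subfield of `F` generated over `C` by all values `λ^b_I(a)` for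
finite `b ⊆ C` that are `p`-independent in `F`, and `a ∈ F^(p)(b) ∩ C`. -/
def Lambda1 (p : ℕ) (C : Subfield F) : Subfield F :=
  Subfield.closure ((C : Set F) ∪ {y | ∃ b : Set F, b ⊆ (C : Set F) ∧ b.Finite ∧
    PIndep p ∅ b ∧ ∃ a ∈ (pSpan p ∅ b : Set F) ∩ (C : Set F), y ∈ lambdaVals p b a})

/-- The iterates `Λ^n_F C`. -/
def LambdaIter (p : ℕ) (C : Subfield F) : ℕ → Subfield F
  | 0 => C
  | n + 1 => Lambda1 p (LambdaIter p C n)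

/-- `A`, `B`, `r` describe the sequence `(ℓ^n_{F/c}(a))_n` of pairs obtained by iterating
the splitting-pairs map `Λ_{F/c}` starting from `(∅, a)`, over the subfield with carrier
`Cs` with chosen `p`-basis `c`.  `A n` and `B n` are the two components of the `n`-th
pair, and `r n` is the well-ordering of `B n` (each `B (n+1)` extending `B n` as an
initial segment).  The `step` condition encodes one application of the splitting-pairs
map: `A (n+1) = A n ⌢ pInd_{F/C(A n)}(B n)` and `B (n+1) = B n ⌢ λ^{c⌢A(n+1)}(B n)`,
where the set `s = pInd_{F/C(A n)}(B n)` is characterized by keeping, running through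
`B n` in its well-order, exactly those elements not in the `p`-span over `C(A n)` of
those already kept. -/
structure IsSplitSeq (p : ℕ) (Cs c a : Set F) (A B : ℕ → Set F)
    (r : ℕ → F → F → Prop) : Prop where
  initA : A 0 = ∅
  initB : B 0 = a
  wf : ∀ n, (B n).WellFoundedOn (r n)
  trans : ∀ n, ∀ x ∈ B n, ∀ y ∈ B n, ∀ z ∈ B n, r n x y → r n y z → r n x z
  total : ∀ n, ∀ x ∈ B n, ∀ y ∈ B n, x = y ∨ r n x y ∨ r n y x
  irrefl : ∀ n, ∀ x ∈ B n, ¬ r n x x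
  mono : ∀ n, B n ⊆ B (n + 1)
  compat : ∀ n, ∀ x ∈ B n, ∀ y ∈ B n, (r (n + 1) x y ↔ r n x y)
  append : ∀ n, ∀ x ∈ B n, ∀ y ∈ B (n + 1), y ∉ B n → r (n + 1) x y
  step : ∀ n, ∃ s ⊆ B n,
    (∀ x ∈ B n, x ∈ s ↔
        x ∉ pSpan p ↑(Subfield.closure (Cs ∪ A n)) (s ∩ {y | r n y x})) ∧
      A (n + 1) = A n ∪ s ∧ B (n + 1) = B n ∪ lambdaSet p (c ∪ A (n + 1)) (B n)

/-- The family `v` is a linear basis, over the subfield `K`, of the subspace of the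
ambient field with carrier `E`: every element of `E` has a unique representation as a
finite `K`-linear combination of the `v i`. -/
def IsLinBasisOf (K : Subfield F) {ι : Type*} (v : ι → F) (E : Set F) : Prop :=
  (∀ i, v i ∈ E) ∧
    ∀ x ∈ E, ∃! l : ι →₀ F, (∀ i, l i ∈ K) ∧ x = l.sum fun i k => k * v i

end SepPaper
namespace SepPaper

section Aux

variable {F : Type*} [Field F] (p : ℕ) [Fact p.Prime] [CharP F p]

set_option linter.unusedSectionVars false

/-- The subfield of `p`-th powers. -/
noncomputable def KpSF (F : Type*) [Field F] (p : ℕ) [Fact p.Prime] [CharP F p] :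
    Subfield F := (frobenius F p).fieldRange

theorem mem_KpSF {x : F} : x ∈ KpSF F p ↔ ∃ y : F, y ^ p = x := by
  simp [KpSF, RingHom.mem_fieldRange, frobenius_def]

theorem pow_mem_KpSF (x : F) : x ^ p ∈ KpSF F p := (mem_KpSF p).2 ⟨x, rfl⟩

theorem coe_KpSF : (↑(KpSF F p) : Set F) = pPowers p F := by
  ext x
  simp [SetLike.mem_coe, mem_KpSF, pPowers, Set.mem_range]

theorem pSpan_empty_eq (S : Set F) :
    pSpan p (∅ : Set F) S = Subfield.closure (↑(KpSF F p) ∪ S) := by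
  rw [pSpan, coe_KpSF, Set.union_empty]

/-- Monomial attached to a multi-index. -/
def mono (I : F →₀ ℕ) : F := I.prod fun t k => t ^ k

theorem mono_zero : mono (0 : F →₀ ℕ) = 1 := Finsupp.prod_zero_index

theorem mono_add (I J : F →₀ ℕ) : mono (I + J) = mono I * mono J :=
  Finsupp.prod_add_index (fun a _ => pow_zero a) (fun a _ b₁ b₂ => pow_add a b₁ b₂)

theorem mono_single (t : F) (k : ℕ) : mono (Finsupp.single t k) = t ^ k :=
  Finsupp.prod_single_index (pow_zero t)

theorem mono_erase (t : F) (I : F →₀ ℕ) :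
    mono I = t ^ I t * mono (I.erase t) := by
  conv_lhs => rw [← Finsupp.single_add_erase t I]
  rw [mono_add, mono_single]

theorem mono_mem_closure {I : F →₀ ℕ} {S T : Set F} (h : ↑I.support ⊆ S) :
    mono I ∈ Subfield.closure (T ∪ S) := by
  refine prod_mem ?_
  intro t ht
  exact pow_mem (Subfield.subset_closure (Set.mem_union_right _ (h ht))) _

theorem mono_reduce (I : F →₀ ℕ) :
    ∃ q r : F →₀ ℕ, q.support ⊆ I.support ∧ r.support ⊆ I.support ∧ (∀ t, r t < p) ∧
      mono I = mono q ^ p * mono r := by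
  have hp0 : p ≠ 0 := (Fact.out : p.Prime).ne_zero
  refine ⟨I.mapRange (· / p) (Nat.zero_div p), I.mapRange (· % p) (Nat.zero_mod p),
    Finsupp.support_mapRange, Finsupp.support_mapRange,
    fun t => Nat.mod_lt _ (Nat.pos_of_ne_zero hp0), ?_⟩
  have h1 : I = p • I.mapRange (· / p) (Nat.zero_div p) + I.mapRange (· % p) (Nat.zero_mod p) := by
    ext t
    simp only [Finsupp.coe_add, Finsupp.coe_smul, Pi.add_apply, Pi.smul_apply,
      Finsupp.mapRange_apply, smul_eq_mul]
    exact (Nat.div_add_mod (I t) p).symm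
  have h2 : mono (p • I.mapRange (· / p) (Nat.zero_div p)) = mono (I.mapRange (· / p) (Nat.zero_div p)) ^ p := by
    have : p • I.mapRange (· / p) (Nat.zero_div p) =
        Finsupp.mapRange (fun k => p * k) (by simp) (I.mapRange (· / p) (Nat.zero_div p)) := by
      ext t; simp [mul_comm]
    rw [this, mono, Finsupp.prod_mapRange_index (fun a => pow_zero a), mono]
    unfold Finsupp.prod
    rw [← Finset.prod_pow]
    exact Finset.prod_congr rfl fun t _ => by rw [← pow_mul, mul_comm]
  conv_lhs => rw [h1]
  rw [mono_add, h2]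


open Polynomial in
theorem powIndep (L : Subfield F) {t : F} (ht : t ∉ L) (htp : t ^ p ∈ L)
    (g : ℕ → F) (hg : ∀ j, g j ∈ L) (h0 : ∑ j ∈ Finset.range p, g j * t ^ j = 0) :
    ∀ j < p, g j = 0 := by
  have hp : p.Prime := Fact.out
  have hamap : ∀ (x : F) (hx : x ∈ L), (algebraMap ↥L F) ⟨x, hx⟩ = x := fun _ _ => rfl
  -- `t` is integral over `L`
  set q : Polynomial ↥L := X ^ p - C ⟨t ^ p, htp⟩ with hqdef
  have hqmonic : q.Monic := monic_X_pow_sub_C _ hp.ne_zero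
  have hqeval : (aeval t) q = 0 := by
    rw [hqdef, map_sub, aeval_X_pow, aeval_C, hamap, sub_self]
  have hint : IsIntegral ↥L t := ⟨q, hqmonic, hqeval⟩
  set m : Polynomial ↥L := minpoly ↥L t with hmdef
  have hdvd : m.map (algebraMap ↥L F) ∣ (X - C t) ^ p := by
    have h1 : m ∣ q := minpoly.dvd ↥L t hqeval
    have h2 : q.map (algebraMap ↥L F) = (X - C t) ^ p := by
      rw [sub_pow_char, hqdef, Polynomial.map_sub, Polynomial.map_pow, map_X, map_C,
        hamap, ← C_pow]
    rw [← h2]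
    exact Polynomial.map_dvd _ h1
  obtain ⟨k, hkp, hassoc⟩ := (dvd_prime_pow (prime_X_sub_C t) p).1 hdvd
  have heq : m.map (algebraMap ↥L F) = (X - C t) ^ k :=
    eq_of_monic_of_associated ((minpoly.monic hint).map _) ((monic_X_sub_C t).pow k) hassoc
  have hknd : m.natDegree = k := by
    have := congrArg natDegree heq
    rwa [natDegree_map, natDegree_pow, natDegree_X_sub_C, mul_one] at this
  have hk0 : 0 < k := hknd ▸ minpoly.natDegree_pos hint
  have hkeqp : k = p := by
    by_contra hkne
    have hklt : k < p := lt_of_le_of_ne hkp hkne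
    -- look at the coefficient of degree `k - 1`
    have hco : ((X - C t) ^ k).coeff (k - 1) = -t * (k : F) := by
      have : (X - C t) = (X + C (-t)) := by rw [map_neg, sub_eq_add_neg]
      rw [this, coeff_X_add_C_pow]
      have h1 : k - (k - 1) = 1 := by omega
      have h2 : k.choose (k - 1) = k := by
        rw [← Nat.choose_symm (Nat.sub_le k 1), Nat.sub_sub_self hk0]
        exact Nat.choose_one_right k
      rw [h1, h2, pow_one]
    have hmem : -t * (k : F) ∈ L := by
      rw [← hco, ← heq, coeff_map]
      exact (m.coeff (k - 1)).2
    have hkne0 : (k : F) ≠ 0 := by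
      rw [Ne, CharP.cast_eq_zero_iff F p k]
      intro hdvd'
      exact absurd (Nat.le_of_dvd hk0 hdvd') (not_le.2 hklt)
    have : t ∈ L := by
      have h3 : (-t * (k : F)) * ((k : F))⁻¹ ∈ L :=
        L.mul_mem hmem (L.inv_mem (natCast_mem L k))
      rw [mul_assoc, mul_inv_cancel₀ hkne0, mul_one] at h3
      simpa using L.neg_mem h3
    exact ht this
  -- the auxiliary polynomial from the relation
  set G : Polynomial ↥L := ∑ j ∈ Finset.range p, C (⟨g j, hg j⟩ : ↥L) * X ^ j with hGdef
  have hGeval : (aeval t) G = 0 := by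
    rw [hGdef, map_sum]
    rw [← h0]
    exact Finset.sum_congr rfl fun j _ => by rw [map_mul, aeval_C, aeval_X_pow, hamap]
  have hG0 : G = 0 := by
    by_contra hG
    have hle : m.degree ≤ G.degree := minpoly.degree_le_of_ne_zero ↥L t hG hGeval
    have hnd : m.natDegree ≤ G.natDegree := natDegree_le_natDegree hle
    have hGnd : G.natDegree ≤ p - 1 := by
      refine natDegree_sum_le_of_forall_le _ _ fun j hj => ?_
      rw [C_mul_X_pow_eq_monomial]
      exact le_trans (natDegree_monomial_le _) (by
        have := Finset.mem_range.1 hj; omega)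
    rw [hknd, hkeqp] at hnd
    omega
  intro j hj
  have hcoeff : G.coeff j = ⟨g j, hg j⟩ := by
    rw [hGdef, finset_sum_coeff]
    have : ∀ i ∈ Finset.range p, (C (⟨g i, hg i⟩ : ↥L) * X ^ i).coeff j
        = if i = j then (⟨g i, hg i⟩ : ↥L) else 0 := fun i _ => by
      rw [C_mul_X_pow_eq_monomial, coeff_monomial]
    rw [Finset.sum_congr rfl this, Finset.sum_ite_eq' (Finset.range p)]
    simp [hj]
  rw [hG0] at hcoeff
  exact congrArg Subtype.val hcoeff.symm


theorem cruxAux (L : Subfield F) (b : Set F) (hpow : ∀ x ∈ b, x ^ p ∈ L)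
    (hind : ∀ x ∈ b, x ∉ Subfield.closure (↑L ∪ (b \ {x}))) :
    ∀ u : Finset F, ↑u ⊆ b →
      ∀ s : Finset (F →₀ ℕ), (∀ I ∈ s, I.support ⊆ u ∧ ∀ t, I t < p) →
      ∀ c : (F →₀ ℕ) → F, (∀ I ∈ s, c I ∈ L) →
      (∑ I ∈ s, mono I * c I) = 0 → ∀ I ∈ s, c I = 0 := by
  intro u
  induction u using Finset.induction_on with
  | empty =>
    intro _ s hs c hc h0 I hI
    have hI0 : ∀ J ∈ s, J = 0 := fun J hJ =>
      Finsupp.support_eq_empty.1 (Finset.subset_empty.1 (hs J hJ).1)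
    have hseq : s = {0} :=
      Finset.eq_singleton_iff_nonempty_unique_mem.2 ⟨⟨I, hI⟩, hI0⟩
    rw [hseq, Finset.sum_singleton, mono_zero, one_mul] at h0
    rw [hI0 I hI]
    exact h0
  | @insert t u' htu IH =>
    intro hsub s hs c hc h0
    have htb : t ∈ b := hsub (Finset.mem_insert_self t u')
    have hu'b : (↑u' : Set F) ⊆ b := fun x hx => hsub (Finset.mem_insert_of_mem hx)
    have hu'bt : (↑u' : Set F) ⊆ b \ {t} := fun x hx =>
      ⟨hu'b hx, fun hxt => htu (hxt ▸ hx)⟩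
    have htL' : t ∉ Subfield.closure (↑L ∪ (↑u' : Set F)) := by
      intro hmem
      refine hind t htb (Subfield.closure_mono ?_ hmem)
      exact Set.union_subset_union_right _ hu'bt
    have hLL' : ∀ x ∈ L, x ∈ Subfield.closure (↑L ∪ (↑u' : Set F)) := fun x hx =>
      Subfield.subset_closure (Set.mem_union_left _ hx)
    set S : ℕ → F := fun j => ∑ I ∈ s.filter (fun I => I t = j), mono (I.erase t) * c I
      with hSdef
    have hSL' : ∀ j, S j ∈ Subfield.closure (↑L ∪ (↑u' : Set F)) := by
      intro j
      refine sum_mem fun I hI => ?_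
      have hIs := Finset.mem_of_mem_filter I hI
      refine mul_mem (mono_mem_closure ?_) (hLL' _ (hc I hIs))
      intro x hx
      rw [Finset.mem_coe, Finsupp.support_erase] at hx
      have hx1 : x ∈ I.support := Finset.mem_of_mem_erase hx
      have hx2 : x ≠ t := Finset.ne_of_mem_erase hx
      rcases Finset.mem_insert.1 ((hs I hIs).1 hx1) with h | h
      · exact absurd h hx2
      · exact Finset.mem_coe.2 h
    have hsum : ∑ j ∈ Finset.range p, S j * t ^ j = ∑ I ∈ s, mono I * c I := by
      rw [hSdef]
      simp only [Finset.sum_mul]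
      rw [← Finset.sum_fiberwise_of_maps_to (g := fun I => I t) (t := Finset.range p)
        (fun I hI => Finset.mem_range.2 ((hs I hI).2 t)) (fun I => mono I * c I)]
      refine Finset.sum_congr rfl fun j _ => Finset.sum_congr rfl fun I hI => ?_
      have hIt : I t = j := (Finset.mem_filter.1 hI).2
      rw [mono_erase t I, hIt]
      ring
    have hS0 : ∀ j < p, S j = 0 :=
      powIndep p _ htL' (hLL' _ (hpow t htb)) S hSL' (by rw [hsum]; exact h0)
    intro I hI
    have hjp : I t < p := (hs I hI).2 t
    -- apply the inductive hypothesis to the fiber of `j = I t`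
    have herase : ∀ I' : F →₀ ℕ, I' t = I t → Finsupp.single t (I t) + I'.erase t = I' := by
      intro I' hI'
      rw [← hI']
      exact Finsupp.single_add_erase t I'
    have hinj : ∀ I₁ ∈ s.filter (fun I' => I' t = I t), ∀ I₂ ∈ s.filter (fun I' => I' t = I t),
        I₁.erase t = I₂.erase t → I₁ = I₂ := by
      intro I₁ h₁ I₂ h₂ he
      rw [← herase I₁ (Finset.mem_filter.1 h₁).2, ← herase I₂ (Finset.mem_filter.1 h₂).2, he]
    have := IH hu'b ((s.filter (fun I' => I' t = I t)).image (Finsupp.erase t))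
      (by
        intro J hJ
        obtain ⟨I', hI', rfl⟩ := Finset.mem_image.1 hJ
        have hI's := Finset.mem_of_mem_filter I' hI'
        constructor
        · rw [Finsupp.support_erase]
          intro x hx
          have hx1 := Finset.mem_of_mem_erase hx
          have hx2 := Finset.ne_of_mem_erase hx
          have := (hs I' hI's).1 hx1
          rcases Finset.mem_insert.1 this with h | h
          · exact absurd h hx2
          · exact h
        · intro t'
          rw [Finsupp.erase_apply]
          split
          · exact Nat.pos_of_ne_zero (Fact.out : p.Prime).ne_zero
          · exact (hs I' hI's).2 t')
      (fun J => c (Finsupp.single t (I t) + J))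
      (by
        intro J hJ
        obtain ⟨I', hI', rfl⟩ := Finset.mem_image.1 hJ
        show c (Finsupp.single t (I t) + I'.erase t) ∈ L
        rw [herase I' (Finset.mem_filter.1 hI').2]
        exact hc I' (Finset.mem_of_mem_filter I' hI'))
      (by
        beta_reduce
        rw [Finset.sum_image hinj]
        have : ∀ I' ∈ s.filter (fun I' => I' t = I t),
            mono (I'.erase t) * c (Finsupp.single t (I t) + I'.erase t)
              = mono (I'.erase t) * c I' := by
          intro I' hI'
          rw [herase I' (Finset.mem_filter.1 hI').2]
        rw [Finset.sum_congr rfl this]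
        exact hS0 (I t) hjp)
      (I.erase t)
      (Finset.mem_image.2 ⟨I, Finset.mem_filter.2 ⟨hI, rfl⟩, rfl⟩)
    beta_reduce at this
    rwa [herase I rfl] at this

theorem crux (L : Subfield F) (b : Set F) (hpow : ∀ x ∈ b, x ^ p ∈ L)
    (hind : ∀ x ∈ b, x ∉ Subfield.closure (↑L ∪ (b \ {x})))
    (s : Finset (F →₀ ℕ)) (hs : ∀ I ∈ s, ↑I.support ⊆ b ∧ ∀ t, I t < p)
    (c : (F →₀ ℕ) → F) (hc : ∀ I ∈ s, c I ∈ L)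
    (h0 : (∑ I ∈ s, mono I * c I) = 0) : ∀ I ∈ s, c I = 0 := by
  refine cruxAux p L b hpow hind (s.sup fun I => I.support) ?_ s ?_ c hc h0
  · intro x hx
    obtain ⟨I, hI, hxI⟩ := Finset.mem_sup.1 hx
    exact (hs I hI).1 hxI
  · exact fun I hI => ⟨Finset.le_sup (f := fun I => I.support) hI, (hs I hI).2⟩


/-- `x` is a combination of monomials in `b` with coefficients in `L`. -/
def Mrep (L : Set F) (b : Set F) (x : F) : Prop :=
  ∃ (s : Finset (F →₀ ℕ)) (c : (F →₀ ℕ) → F),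
    (∀ I ∈ s, ↑I.support ⊆ b ∧ ∀ t, I t < p) ∧ (∀ I ∈ s, c I ∈ L) ∧
    x = ∑ I ∈ s, mono I * c I

theorem mrep_mem_closure {L : Subfield F} {b : Set F} {x : F} (h : Mrep p ↑L b x) :
    x ∈ Subfield.closure (↑L ∪ b) := by
  obtain ⟨s, c, hs, hc, rfl⟩ := h
  exact sum_mem fun I hI => mul_mem (mono_mem_closure (hs I hI).1)
    (Subfield.subset_closure (Set.mem_union_left _ (hc I hI)))

theorem mono_pow_mem (L : Subfield F) {b : Set F} (hpow : ∀ x ∈ b, x ^ p ∈ L)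
    {q : F →₀ ℕ} (hq : ↑q.support ⊆ b) : mono q ^ p ∈ L := by
  rw [mono]
  unfold Finsupp.prod
  rw [← Finset.prod_pow]
  refine prod_mem fun t ht => ?_
  rw [← pow_mul, mul_comm, pow_mul]
  exact pow_mem (hpow t (hq ht)) _

theorem extend_sum {s₁ s : Finset (F →₀ ℕ)} (h : s₁ ⊆ s) (c : (F →₀ ℕ) → F) :
    ∑ I ∈ s, mono I * (if I ∈ s₁ then c I else 0) = ∑ I ∈ s₁, mono I * c I := by
  rw [← Finset.sum_subset h (fun I _ hI => by rw [if_neg hI, mul_zero])]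
  exact Finset.sum_congr rfl fun I hI => by rw [if_pos hI]

theorem mem_closure_mrep (L : Subfield F) (b : Finset F)
    (hpow : ∀ x ∈ (↑b : Set F), x ^ p ∈ L) {x : F}
    (hx : x ∈ Subfield.closure (↑L ∪ ↑b)) : Mrep p ↑L ↑b x := by
  classical
  have hp : p.Prime := Fact.out
  set idx : Set (F →₀ ℕ) := {I | ↑I.support ⊆ (↑b : Set F) ∧ ∀ t, I t < p} with hidx
  have hfinIdx : idx.Finite := by
    have : Finite ↥idx := by
      have hinj : Function.Injective
          (fun I : ↥idx => (fun t : ↥(↑b : Set F) => (⟨I.1 ↑t, I.2.2 ↑t⟩ : Fin p))) := by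
        intro I J h
        ext x
        by_cases hxb : x ∈ (↑b : Set F)
        · exact congrArg Fin.val (congrFun h ⟨x, hxb⟩)
        · have h1 : I.1 x = 0 := by
            by_contra h0
            exact hxb (I.2.1 (Finsupp.mem_support_iff.2 h0))
          have h2 : J.1 x = 0 := by
            by_contra h0
            exact hxb (J.2.1 (Finsupp.mem_support_iff.2 h0))
          rw [h1, h2]
      exact Finite.of_injective _ hinj
    exact Set.toFinite _
  set monoSet : Set F := mono '' idx with hms
  have hfin : monoSet.Finite := hfinIdx.image mono
  set M : Submodule ↥L F := Submodule.span ↥L monoSet with hM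
  haveI : FiniteDimensional ↥L ↥M := FiniteDimensional.span_of_finite _ hfin
  have hamap : ∀ (y : F) (hy : y ∈ L), (algebraMap ↥L F) ⟨y, hy⟩ = y := fun _ _ => rfl
  have hLmul : ∀ (y : F) (hy : y ∈ L) (z : F), z ∈ M → y * z ∈ M := by
    intro y hy z hz
    have := M.smul_mem ⟨y, hy⟩ hz
    rwa [Algebra.smul_def, hamap] at this
  have hmonoM : ∀ I : F →₀ ℕ, ↑I.support ⊆ (↑b : Set F) → mono I ∈ M := by
    intro I hI
    obtain ⟨q, r, hqsupp0, hrsupp, hrlt, heq⟩ := mono_reduce p I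
    have hqsupp : ↑q.support ⊆ (↑b : Set F) := fun t ht => hI (hqsupp0 ht)
    have hrsupp' : ↑r.support ⊆ (↑b : Set F) := fun t ht => hI (hrsupp ht)
    rw [heq]
    exact hLmul _ (mono_pow_mem p L hpow hqsupp) _
      (Submodule.subset_span ⟨r, ⟨hrsupp', hrlt⟩, rfl⟩)
  have honeM : (1 : F) ∈ M := by
    rw [← mono_zero]
    exact hmonoM 0 (by simp)
  have hmul : ∀ x ∈ M, ∀ y ∈ M, x * y ∈ M := by
    have hle : M * M ≤ M := by
      rw [hM, Submodule.span_mul_span]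
      refine Submodule.span_le.2 ?_
      rintro _ ⟨_, ⟨I, hI, rfl⟩, _, ⟨J, hJ, rfl⟩, rfl⟩
      show mono I * mono J ∈ M
      rw [← mono_add]
      refine hmonoM _ ?_
      intro t ht
      rcases Finset.mem_union.1 (Finsupp.support_add (Finset.mem_coe.1 ht)) with h | h
      · exact hI.1 h
      · exact hJ.1 h
    exact fun x hx y hy => hle (Submodule.mul_mem_mul hx hy)
  have hinv : ∀ y : F, y ∈ M → y⁻¹ ∈ M := by
    intro y hy
    by_cases hy0 : y = 0
    · rw [hy0, inv_zero]; exact M.zero_mem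
    · set f : M →ₗ[↥L] M :=
        { toFun := fun m => ⟨y * ↑m, hmul y hy ↑m m.2⟩
          map_add' := by intro m₁ m₂; ext; simp [mul_add]
          map_smul' := by
            intro a m
            ext
            show y * (a • (↑m : F)) = a • (y * ↑m)
            rw [Algebra.smul_def, Algebra.smul_def]
            ring } with hf
      have hinj : Function.Injective f := by
        intro m₁ m₂ h
        have := congrArg (Subtype.val) h
        exact Subtype.ext (mul_left_cancel₀ hy0 this)
      obtain ⟨z, hz⟩ := (LinearMap.injective_iff_surjective).1 hinj ⟨1, honeM⟩
      have : y * ↑z = 1 := congrArg Subtype.val hz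
      rw [inv_eq_of_mul_eq_one_right this]
      exact z.2
  set E : Subfield F :=
    { carrier := ↑M
      mul_mem' := fun hx hy => hmul _ hx _ hy
      one_mem' := honeM
      add_mem' := fun hx hy => M.add_mem hx hy
      zero_mem' := M.zero_mem
      neg_mem' := fun hx => M.neg_mem hx
      inv_mem' := hinv } with hE
  have hle : Subfield.closure (↑L ∪ ↑b) ≤ E := by
    refine Subfield.closure_le.2 ?_
    rintro y (hy | hy)
    · show y ∈ M
      have := hLmul y hy 1 honeM
      rwa [mul_one] at this
    · show y ∈ M
      have : y = mono (Finsupp.single y 1) := by rw [mono_single, pow_one]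
      rw [this]
      refine Submodule.subset_span ⟨Finsupp.single y 1, ⟨?_, ?_⟩, rfl⟩
      · intro t ht
        rw [Finset.mem_coe, Finsupp.support_single_ne_zero y one_ne_zero] at ht
        rw [Finset.mem_singleton.1 ht]
        exact hy
      · intro t
        rw [Finsupp.single_apply]
        split
        · exact hp.one_lt
        · exact hp.pos
  have hxM : x ∈ M := hle hx
  -- now extract a representation by span induction
  clear hx
  induction hxM using Submodule.span_induction with
  | mem y hy =>
    obtain ⟨I, hI, rfl⟩ := hy
    exact ⟨{I}, fun _ => 1, fun J hJ => by rw [Finset.mem_singleton.1 hJ]; exact hI, fun _ _ => L.one_mem, by simp⟩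
  | zero => exact ⟨∅, 0, by simp, by simp, by simp⟩
  | add y z hy hz hyr hzr =>
    obtain ⟨s₁, c₁, hs₁, hc₁, rfl⟩ := hyr
    obtain ⟨s₂, c₂, hs₂, hc₂, rfl⟩ := hzr
    refine ⟨s₁ ∪ s₂, fun I => (if I ∈ s₁ then c₁ I else 0) + (if I ∈ s₂ then c₂ I else 0),
      ?_, ?_, ?_⟩
    · intro I hI
      rcases Finset.mem_union.1 hI with h | h
      · exact hs₁ I h
      · exact hs₂ I h
    · intro I _
      refine L.add_mem ?_ ?_ <;> · split
                                   · first
                                      | exact hc₁ I (by assumption)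
                                      | exact hc₂ I (by assumption)
                                   · exact L.zero_mem
    · rw [← extend_sum Finset.subset_union_left c₁, ← extend_sum Finset.subset_union_right c₂,
        ← Finset.sum_add_distrib]
      exact Finset.sum_congr rfl fun I _ => by ring
  | smul a y hy hyr =>
    obtain ⟨s, c, hs, hc, rfl⟩ := hyr
    refine ⟨s, fun I => ↑a * c I, hs, fun I hI => L.mul_mem a.2 (hc I hI), ?_⟩
    rw [Algebra.smul_def, hamap ↑a a.2, Finset.mul_sum]
    exact Finset.sum_congr rfl fun I _ => by ring


theorem extract (g : Finset F) :
    ∃ b : Finset F, ↑b ⊆ (↑g : Set F) ∧ PIndep p ∅ (↑b : Set F) ∧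
      ∀ x ∈ g, Mrep p ↑(KpSF F p) ↑b x := by
  classical
  induction g using Finset.strongInduction with
  | _ g IH =>
    by_cases hg : PIndep p ∅ (↑g : Set F)
    · refine ⟨g, subset_rfl, hg, fun x hx => ⟨{Finsupp.single x 1}, fun _ => 1, ?_, ?_, ?_⟩⟩
      · intro I hI
        rw [Finset.mem_singleton.1 hI]
        constructor
        · intro t ht
          rw [Finset.mem_coe, Finsupp.support_single_ne_zero x one_ne_zero,
            Finset.mem_singleton] at ht
          rw [ht]; exact hx
        · intro t
          rw [Finsupp.single_apply]
          split
          · exact (Fact.out : p.Prime).one_lt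
          · exact (Fact.out : p.Prime).pos
      · exact fun _ _ => (KpSF F p).one_mem
      · rw [Finset.sum_singleton, mono_single, pow_one, mul_one]
    · rw [PIndep] at hg
      push_neg at hg
      obtain ⟨a, hag, ha⟩ := hg
      have hag' : a ∈ g := hag
      obtain ⟨b, hbsub, hbind, hbrep⟩ := IH (g.erase a) (Finset.erase_ssubset hag')
      have hbsub' : (↑b : Set F) ⊆ (↑g : Set F) := fun x hx =>
        Finset.mem_coe.2 (Finset.mem_of_mem_erase (Finset.mem_coe.1 (hbsub hx)))
      refine ⟨b, hbsub', hbind, ?_⟩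
      intro x hx
      by_cases hxa : x = a
      · subst hxa
        rw [pSpan_empty_eq] at ha
        have hmem : x ∈ Subfield.closure (↑(KpSF F p) ∪ (↑b : Set F)) := by
          refine Subfield.closure_le.2 ?_ ha
          rintro y (hy | hy)
          · exact Subfield.subset_closure (Set.mem_union_left _ hy)
          · have hyg : y ∈ g.erase x := by
              rw [← Finset.coe_erase] at hy
              exact Finset.mem_coe.1 hy
            exact mrep_mem_closure p (hbrep y hyg)
        exact mem_closure_mrep p _ b (fun y _ => pow_mem_KpSF p y) hmem
      · exact hbrep x (Finset.mem_erase.2 ⟨hxa, hx⟩)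

theorem sepLD_fin (D : Subfield F) (hsep : SepExt p (↑D : Set F) Set.univ) :
    ∀ (n : ℕ) (d : Fin n → F), (∀ i, d i ∈ D) →
      (∀ c : Fin n → F, (∀ i, ∃ y ∈ D, y ^ p = c i) → (∑ i, c i * d i) = 0 → ∀ i, c i = 0) →
      ∀ lam : Fin n → F, (∑ i, lam i ^ p * d i) = 0 → ∀ i, lam i = 0 := by
  classical
  have hp : p.Prime := Fact.out
  intro n
  induction n using Nat.strong_induction_on with
  | _ n IH =>
  intro d hd hind lam hrel
  by_cases hli : ∀ c : Fin n → F, (∀ i, c i ∈ (↑D : Set F)) → (∑ i, c i * lam i) = 0 →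
      ∀ i, c i = 0
  · -- `lam` is linearly independent over `D`; use separability
    have h2 : ∀ i, d i = 0 := by
      refine hsep n lam (fun _ => trivial) hli d (fun i => hd i) ?_
      rw [← hrel]
      exact Finset.sum_congr rfl fun i _ => mul_comm _ _
    intro i
    exfalso
    have h3 := hind (fun j => if j = i then 1 else 0)
      (fun j => by
        show ∃ y ∈ D, y ^ p = if j = i then 1 else 0
        split
        · exact ⟨1, D.one_mem, one_pow p⟩
        · exact ⟨0, D.zero_mem, zero_pow hp.ne_zero⟩)
      (by
        refine Finset.sum_eq_zero fun j _ => ?_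
        rw [h2 j, mul_zero]) i
    simp at h3
  · push_neg at hli
    obtain ⟨c, hc, hcrel, k, hck⟩ := hli
    obtain ⟨m, rfl⟩ : ∃ m, n = m + 1 := ⟨n - 1, by have := k.is_lt; omega⟩
    set γ : Fin (m + 1) → F := fun i => -(c i / c k) with hγ
    have hγD : ∀ i, γ i ∈ D := fun i => D.neg_mem (D.div_mem (hc i) (hc k))
    have hlamk : lam k = ∑ j : Fin m, γ (k.succAbove j) * lam (k.succAbove j) := by
      have h1 : c k * lam k + ∑ j : Fin m, c (k.succAbove j) * lam (k.succAbove j) = 0 := by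
        rw [← Fin.sum_univ_succAbove (fun i => c i * lam i) k]
        exact hcrel
      have h2 : ∑ j : Fin m, γ (k.succAbove j) * lam (k.succAbove j)
          = -(∑ j : Fin m, c (k.succAbove j) * lam (k.succAbove j)) / c k := by
        rw [neg_div, Finset.sum_div, ← Finset.sum_neg_distrib]
        refine Finset.sum_congr rfl fun j _ => ?_
        simp only [hγ]
        ring
      rw [h2, ← eq_neg_of_add_eq_zero_left h1, mul_div_cancel_left₀ _ hck]
    set d' : Fin m → F := fun j => d (k.succAbove j) + γ (k.succAbove j) ^ p * d k with hd'
    have hrel' : (∑ j : Fin m, lam (k.succAbove j) ^ p * d' j) = 0 := by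
      have e1 : (∑ i, lam i ^ p * d i)
          = lam k ^ p * d k + ∑ j : Fin m, lam (k.succAbove j) ^ p * d (k.succAbove j) :=
        Fin.sum_univ_succAbove (fun i => lam i ^ p * d i) k
      calc (∑ j : Fin m, lam (k.succAbove j) ^ p * d' j)
          = (∑ j : Fin m, lam (k.succAbove j) ^ p * d (k.succAbove j))
            + ∑ j : Fin m, (γ (k.succAbove j) * lam (k.succAbove j)) ^ p * d k := by
            rw [← Finset.sum_add_distrib]
            refine Finset.sum_congr rfl fun j _ => ?_
            rw [hd', mul_pow]
            ring
        _ = (∑ j : Fin m, lam (k.succAbove j) ^ p * d (k.succAbove j))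
            + (∑ j : Fin m, γ (k.succAbove j) * lam (k.succAbove j)) ^ p * d k := by
            rw [sum_pow_char, Finset.sum_mul]
        _ = 0 := by
            rw [← hlamk, add_comm, ← e1]
            exact hrel
    have hind' : ∀ c' : Fin m → F, (∀ j, ∃ y ∈ D, y ^ p = c' j) →
        (∑ j, c' j * d' j) = 0 → ∀ j, c' j = 0 := by
      intro c' hc' hrel''
      choose β hβD hβp using hc'
      set Ck : F := (∑ j : Fin m, β j * γ (k.succAbove j)) ^ p with hCk
      set C : Fin (m + 1) → F := k.insertNth Ck c' with hC
      have h1 : ∀ j : Fin m, C (k.succAbove j) = c' j := fun j => by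
        rw [hC, Fin.insertNth_apply_succAbove]
      have h2 : C k = Ck := by rw [hC, Fin.insertNth_apply_same]
      have hCmem : ∀ i, ∃ y ∈ D, y ^ p = C i := by
        intro i
        by_cases hik : i = k
        · rw [hik, h2]
          refine ⟨∑ j : Fin m, β j * γ (k.succAbove j), ?_, ?_⟩
          · exact sum_mem fun j _ => D.mul_mem (hβD j) (hγD _)
          · rw [hCk]
        · obtain ⟨j, rfl⟩ := Fin.exists_succAbove_eq hik
          exact ⟨β j, hβD j, by rw [h1 j]; exact hβp j⟩
      have h3 : (∑ j : Fin m, c' j * d (k.succAbove j))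
          + (∑ j : Fin m, c' j * γ (k.succAbove j) ^ p) * d k = 0 := by
        rw [Finset.sum_mul, ← Finset.sum_add_distrib, ← hrel'']
        refine Finset.sum_congr rfl fun j _ => ?_
        simp only [hd']
        ring
      have h4 : (∑ j : Fin m, c' j * γ (k.succAbove j) ^ p) = Ck := by
        rw [hCk, sum_pow_char]
        refine Finset.sum_congr rfl fun j _ => ?_
        rw [mul_pow, hβp j]
      have hCrel : (∑ i, C i * d i) = 0 := by
        rw [Fin.sum_univ_succAbove (fun i => C i * d i) k, h2]
        simp only [h1]
        rw [← h4]
        linear_combination h3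
      have hCzero := hind C hCmem hCrel
      intro j
      have := hCzero (k.succAbove j)
      rwa [h1 j] at this
    have hlam' : ∀ j : Fin m, lam (k.succAbove j) = 0 := by
      refine IH m (by omega) d' ?_ hind' _ hrel'
      intro j
      simp only [hd']
      exact D.add_mem (hd _) (D.mul_mem (pow_mem (hγD _) p) (hd k))
    intro i
    by_cases hik : i = k
    · rw [hik, hlamk]
      exact Finset.sum_eq_zero fun j _ => by rw [hlam' j, mul_zero]
    · obtain ⟨j, rfl⟩ := Fin.exists_succAbove_eq hik
      exact hlam' j


theorem sepLD {ι : Type*} (D : Subfield F) (hsep : SepExt p (↑D : Set F) Set.univ)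
    (T : Finset ι) (d : ι → F) (hd : ∀ o ∈ T, d o ∈ D)
    (hind : ∀ c : ι → F, (∀ o ∈ T, ∃ y ∈ D, y ^ p = c o) → (∑ o ∈ T, c o * d o) = 0 →
      ∀ o ∈ T, c o = 0)
    (lam : ι → F) (hrel : (∑ o ∈ T, lam o ^ p * d o) = 0) : ∀ o ∈ T, lam o = 0 := by
  classical
  set n := T.card with hn
  set e : Fin n → ι := fun i => ↑(T.equivFin.symm i) with he
  have he_mem : ∀ i, e i ∈ T := fun i => (T.equivFin.symm i).2
  have hsum : ∀ f : ι → F, (∑ o ∈ T, f o) = ∑ i, f (e i) := by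
    intro f
    rw [← Finset.sum_coe_sort T f]
    exact (Equiv.sum_comp T.equivFin.symm (fun o : ↥T => f ↑o)).symm
  have main := sepLD_fin p D hsep n (d ∘ e) (fun i => hd _ (he_mem i))
    (by
      intro cf hcf hcrel i
      set c : ι → F := fun o => if h : o ∈ T then cf (T.equivFin ⟨o, h⟩) else 0 with hcdef
      have hce : ∀ i, c (e i) = cf i := by
        intro i
        rw [hcdef]
        simp only
        rw [dif_pos (he_mem i)]
        congr 1
        have : (⟨e i, he_mem i⟩ : ↥T) = T.equivFin.symm i := Subtype.ext rfl
        rw [this, Equiv.apply_symm_apply]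
      have h5 := hind c
        (by
          intro o ho
          rw [hcdef]
          simp only
          rw [dif_pos ho]
          exact hcf _)
        (by
          rw [hsum (fun o => c o * d o)]
          rw [← hcrel]
          exact Finset.sum_congr rfl fun i _ => by rw [hce i, Function.comp_apply])
      have := h5 (e i) (he_mem i)
      rwa [hce i] at this)
    (lam ∘ e)
    (by
      simp only [Function.comp_apply]
      rw [← hsum (fun o => lam o ^ p * d o)]
      exact hrel)
  intro o ho
  have h6 : e (T.equivFin ⟨o, ho⟩) = o := by
    rw [he]
    simp only
    rw [Equiv.symm_apply_apply]
  have := main (T.equivFin ⟨o, ho⟩)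
  rw [Function.comp_apply, h6] at this
  exact this


/-- `D` is closed under taking lambda coefficients. -/
def LClosed (D : Subfield F) : Prop :=
  ∀ b : Set F, b ⊆ ↑D → b.Finite → PIndep p ∅ b → ∀ a ∈ D,
    ∀ l : (↥b →₀ ℕ) →₀ F, IsLambdaFam p b a l → ∀ I, l I ∈ D

theorem emb_subtypeDomain {b : Set F} (J : ↥b →₀ ℕ) :
    Finsupp.subtypeDomain (· ∈ b) (J.embDomain ⟨Subtype.val, Subtype.val_injective⟩) = J := by
  ext t
  rw [Finsupp.subtypeDomain_apply]
  exact Finsupp.embDomain_apply_self ⟨Subtype.val, Subtype.val_injective⟩ J t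

/-- The p-th powers of `D` as a subfield. -/
noncomputable def DpSF (D : Subfield F) : Subfield F := D.map (frobenius F p)

theorem mem_DpSF {D : Subfield F} {x : F} : x ∈ DpSF p D ↔ ∃ y ∈ D, y ^ p = x := by
  unfold DpSF
  rw [Subfield.mem_map]
  constructor
  · rintro ⟨y, hy, rfl⟩; exact ⟨y, hy, (frobenius_def p y).symm⟩
  · rintro ⟨y, hy, rfl⟩; exact ⟨y, hy, frobenius_def p y⟩

theorem DpSF_subset_KpSF (D : Subfield F) : (↑(DpSF p D) : Set F) ⊆ ↑(KpSF F p) := by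
  intro x hx
  obtain ⟨y, _, rfl⟩ := (mem_DpSF p).1 hx
  exact pow_mem_KpSF p y

theorem neg_pow_charP (x : F) : (-x) ^ p = -(x ^ p) := by
  have := map_neg (frobenius F p) x
  rwa [frobenius_def, frobenius_def] at this

theorem sep_LClosed (D : Subfield F) (hsep : SepExt p (↑D : Set F) Set.univ) :
    LClosed p D := by
  classical
  have hp : p.Prime := Fact.out
  intro b hbD hbfin hbind a ha l hl I0
  set emb : ↥b ↪ F := ⟨Subtype.val, Subtype.val_injective⟩ with hemb
  set s : Finset (F →₀ ℕ) := l.support.image (fun J => J.embDomain emb) with hs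
  set cKp : (F →₀ ℕ) → F := fun J => l (Finsupp.subtypeDomain (· ∈ b) J) with hcKp
  have hinj : ∀ J₁ ∈ l.support, ∀ J₂ ∈ l.support,
      J₁.embDomain emb = J₂.embDomain emb → J₁ = J₂ :=
    fun J₁ _ J₂ _ h => Finsupp.embDomain_injective emb h
  have hcE : ∀ J : ↥b →₀ ℕ, cKp (J.embDomain emb) = l J := by
    intro J
    rw [hcKp]
    simp only
    rw [hemb, emb_subtypeDomain]
  have hsupp : ∀ J ∈ s, ↑J.support ⊆ b ∧ ∀ t, J t < p := by
    intro J hJ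
    obtain ⟨J', hJ', rfl⟩ := Finset.mem_image.1 hJ
    constructor
    · intro x hx
      rw [Finset.mem_coe, Finsupp.support_embDomain, Finset.mem_map] at hx
      obtain ⟨t, _, rfl⟩ := hx
      exact t.2
    · intro t
      by_cases ht : t ∈ b
      · have h1 : t = emb ⟨t, ht⟩ := rfl
        rw [h1, Finsupp.embDomain_apply_self]
        exact hl.1 J' hJ' ⟨t, ht⟩
      · rw [Finsupp.embDomain_notin_range _ _ t (by rintro ⟨u, rfl⟩; exact ht u.2)]
        exact hp.pos
  have hexp : a = ∑ J ∈ s, mono J * cKp J ^ p := by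
    conv_lhs => rw [hl.2]
    rw [hs, Finset.sum_image hinj, Finsupp.sum]
    refine Finset.sum_congr rfl fun J hJ => ?_
    rw [hcE J]
    simp only [mono]
    rw [Finsupp.prod_embDomain]
    rfl
  have hindKp : ∀ x ∈ b, x ∉ Subfield.closure (↑(KpSF F p) ∪ (b \ {x})) := by
    intro x hx
    have := hbind x hx
    rwa [pSpan_empty_eq] at this
  have hindD : ∀ x ∈ b, x ∉ Subfield.closure (↑(DpSF p D) ∪ (b \ {x})) := by
    intro x hx hmem
    exact hindKp x hx (Subfield.closure_mono
      (Set.union_subset_union_left _ (DpSF_subset_KpSF p D)) hmem)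
  have hDpow : ∀ x ∈ b, x ^ p ∈ DpSF p D := fun x hx => (mem_DpSF p).2 ⟨x, hbD hx, rfl⟩
  by_cases hclaim : ∃ dc : (F →₀ ℕ) → F, (∀ J ∈ s, dc J ∈ DpSF p D) ∧
      a = ∑ J ∈ s, mono J * dc J
  · obtain ⟨dc, hdc, hdceq⟩ := hclaim
    have hzero := crux p (KpSF F p) b (fun x _ => pow_mem_KpSF p x) hindKp s hsupp
      (fun J => cKp J ^ p - dc J)
      (fun J hJ => sub_mem (pow_mem_KpSF p _) (DpSF_subset_KpSF p D (hdc J hJ)))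
      (by
        have : ∀ J ∈ s, mono J * (cKp J ^ p - dc J)
            = mono J * cKp J ^ p - mono J * dc J := fun J _ => by ring
        rw [Finset.sum_congr rfl this, Finset.sum_sub_distrib, ← hexp, ← hdceq, sub_self])
    by_cases hI0 : I0 ∈ l.support
    · have hEmem : I0.embDomain emb ∈ s := by
        rw [hs]
        exact Finset.mem_image_of_mem _ hI0
      have h6 := hzero _ hEmem
      have h7 : cKp (I0.embDomain emb) ^ p = dc (I0.embDomain emb) := by
        have := sub_eq_zero.1 h6
        exact this
      rw [hcE] at h7
      obtain ⟨y, hyD, hyp⟩ := (mem_DpSF p).1 (hdc _ hEmem)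
      have h8 : l I0 = y := by
        have h9 : (frobenius F p) (l I0) = (frobenius F p) y := by
          rw [frobenius_def, frobenius_def, h7, hyp]
        exact frobenius_inj F p h9
      rw [h8]
      exact hyD
    · rw [Finsupp.notMem_support_iff.1 hI0]
      exact D.zero_mem
  · exfalso
    set T : Finset (Option (F →₀ ℕ)) := insert none (s.image some) with hT
    set dd : Option (F →₀ ℕ) → F := fun o => o.elim a (fun J => mono J) with hdd
    have hnone : none ∉ s.image some := by simp
    have hsomemem : ∀ J ∈ s, some J ∈ T := fun J hJ => by
      rw [hT]
      exact Finset.mem_insert_of_mem (Finset.mem_image_of_mem _ hJ)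
    have hmonoD : ∀ J ∈ s, mono J ∈ D := by
      intro J hJ
      exact prod_mem fun t ht => pow_mem (hbD ((hsupp J hJ).1 ht)) _
    have hddD : ∀ o ∈ T, dd o ∈ D := by
      intro o ho
      cases o with
      | none => exact ha
      | some J =>
        rw [hT, Finset.mem_insert] at ho
        rcases ho with h | h
        · exact absurd h (by simp)
        · obtain ⟨J', hJ', hJe⟩ := Finset.mem_image.1 h
          have : J' = J := Option.some_injective _ hJe
          subst this
          exact hmonoD J' hJ'
    have hsome_inj : ∀ J₁ ∈ s, ∀ J₂ ∈ s, (some J₁ : Option (F →₀ ℕ)) = some J₂ → J₁ = J₂ :=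
      fun J₁ _ J₂ _ h => Option.some_injective _ h
    have hddind : ∀ cc : Option (F →₀ ℕ) → F, (∀ o ∈ T, ∃ y ∈ D, y ^ p = cc o) →
        (∑ o ∈ T, cc o * dd o) = 0 → ∀ o ∈ T, cc o = 0 := by
      intro cc hcc hrel0
      rw [hT, Finset.sum_insert hnone, Finset.sum_image hsome_inj] at hrel0
      have hccDp : ∀ J ∈ s, cc (some J) ∈ DpSF p D := fun J hJ =>
        (mem_DpSF p).2 (hcc (some J) (hsomemem J hJ))
      by_cases h0 : cc none = 0
      · rw [h0, zero_mul, zero_add] at hrel0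
        have hz := crux p (DpSF p D) b hDpow hindD s hsupp (fun J => cc (some J)) hccDp
          (by
            rw [← hrel0]
            exact Finset.sum_congr rfl fun J _ => mul_comm _ _)
        intro o ho
        cases o with
        | none => exact h0
        | some J =>
          rw [hT, Finset.mem_insert] at ho
          rcases ho with h | h
          · exact absurd h (by simp)
          · obtain ⟨J', hJ', hJe⟩ := Finset.mem_image.1 h
            have : J' = J := Option.some_injective _ hJe
            subst this
            exact hz J' hJ'
      · exfalso
        refine hclaim ⟨fun J => -(cc (some J)) / cc none, fun J hJ =>
          (DpSF p D).div_mem ((DpSF p D).neg_mem (hccDp J hJ))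
            ((mem_DpSF p).2 (hcc none (by rw [hT]; exact Finset.mem_insert_self _ _))), ?_⟩
        have h1 : cc none * a = -∑ J ∈ s, cc (some J) * mono J := by
          simp only [hdd] at hrel0
          exact eq_neg_of_add_eq_zero_left hrel0
        have h2 : a = (-∑ J ∈ s, cc (some J) * mono J) / cc none := by
          rw [← h1, mul_div_cancel_left₀ _ h0]
        rw [h2, neg_div, Finset.sum_div, ← Finset.sum_neg_distrib]
        exact Finset.sum_congr rfl fun J _ => by ring
    have hLD := sepLD p D hsep T dd hddD hddind
      (fun o => o.elim 1 (fun J => -(cKp J)))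
      (by
        rw [hT, Finset.sum_insert hnone, Finset.sum_image hsome_inj]
        simp only [hdd, Option.elim]
        rw [one_pow, one_mul]
        have : ∀ J ∈ s, (-(cKp J)) ^ p * mono J = -(mono J * cKp J ^ p) := by
          intro J _
          rw [neg_pow_charP]
          ring
        rw [Finset.sum_congr rfl this, Finset.sum_neg_distrib, ← hexp, add_neg_cancel])
    have := hLD none (by rw [hT]; exact Finset.mem_insert_self _ _)
    simp only [Option.elim] at this
    exact one_ne_zero this


theorem subtypeDomain_emb {b : Set F} (I : F →₀ ℕ) (hI : ↑I.support ⊆ b) :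
    (Finsupp.subtypeDomain (· ∈ b) I).embDomain ⟨Subtype.val, Subtype.val_injective⟩ = I := by
  classical
  ext x
  by_cases hx : x ∈ b
  · have h1 : x = (⟨Subtype.val, Subtype.val_injective⟩ : ↥b ↪ F) ⟨x, hx⟩ := rfl
    rw [h1, Finsupp.embDomain_apply_self, Finsupp.subtypeDomain_apply]
    rfl
  · rw [Finsupp.embDomain_notin_range _ _ x (by rintro ⟨t, rfl⟩; exact hx t.2), eq_comm,
      ← Finsupp.notMem_support_iff]
    exact fun h => hx (hI h)

theorem LClosed_sep (D : Subfield F) (hD : LClosed p D) :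
    SepExt p (↑D : Set F) Set.univ := by
  classical
  have hp : p.Prime := Fact.out
  intro n x hx hxind d hd hrel
  obtain ⟨b, hbsub, hbind, hbrep⟩ := extract p ((Finset.univ : Finset (Fin n)).image d)
  have hbD : (↑b : Set F) ⊆ ↑D := by
    intro z hz
    obtain ⟨i, _, rfl⟩ := Finset.mem_image.1 (Finset.mem_coe.1 (hbsub hz))
    exact hd i
  have hindKp : ∀ z ∈ (↑b : Set F), z ∉ Subfield.closure (↑(KpSF F p) ∪ ((↑b : Set F) \ {z})) := by
    intro z hz
    have := hbind z hz
    rwa [pSpan_empty_eq] at this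
  -- for each `i`, a lambda representation of `d i` with coefficients in `D`
  have key : ∀ i : Fin n, ∃ (s : Finset (F →₀ ℕ)) (e : (F →₀ ℕ) → F),
      (∀ I ∈ s, ↑I.support ⊆ (↑b : Set F) ∧ ∀ t, I t < p) ∧ (∀ I ∈ s, e I ∈ D) ∧
      d i = ∑ I ∈ s, mono I * e I ^ p := by
    intro i
    obtain ⟨s, c, hs, hc, heq⟩ := hbrep (d i) (Finset.mem_image_of_mem d (Finset.mem_univ i))
    have hroots : ∀ I ∈ s, ∃ z, z ^ p = c I := by
      intro I hI
      obtain ⟨z, hz⟩ := (mem_KpSF p).1 (hc I hI)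
      exact ⟨z, hz⟩
    set y : (F →₀ ℕ) → F := fun I => if h : ∃ z, z ^ p = c I then h.choose else 0 with hy
    have hyp : ∀ I ∈ s, y I ^ p = c I := by
      intro I hI
      rw [hy]
      simp only
      rw [dif_pos (hroots I hI)]
      exact (hroots I hI).choose_spec
    set emb : ↥(↑b : Set F) ↪ F := ⟨Subtype.val, Subtype.val_injective⟩ with hemb
    set sd : (F →₀ ℕ) → (↥(↑b : Set F) →₀ ℕ) :=
      fun I => Finsupp.subtypeDomain (· ∈ (↑b : Set F)) I with hsd
    have hEsd : ∀ I ∈ s, (sd I).embDomain emb = I := fun I hI =>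
      subtypeDomain_emb I (hs I hI).1
    set f : (↥(↑b : Set F) →₀ ℕ) → F :=
      fun W => if W.embDomain emb ∈ s then y (W.embDomain emb) else 0 with hf
    have hfs : ∀ W, f W ≠ 0 → W ∈ s.image sd := by
      intro W h
      rw [hf] at h
      simp only at h
      by_cases hmem : W.embDomain emb ∈ s
      · refine Finset.mem_image.2 ⟨W.embDomain emb, hmem, ?_⟩
        rw [hsd]
        simp only
        rw [hemb, emb_subtypeDomain]
      · rw [if_neg hmem] at h
        exact absurd rfl h
    set l : (↥(↑b : Set F) →₀ ℕ) →₀ F := Finsupp.onFinset (s.image sd) f hfs with hl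
    have hfl : ∀ I ∈ s, l (sd I) = y I := by
      intro I hI
      rw [hl, Finsupp.onFinset_apply, hf]
      simp only
      rw [hEsd I hI, if_pos hI]
    have hsd_inj : ∀ I₁ ∈ s, ∀ I₂ ∈ s, sd I₁ = sd I₂ → I₁ = I₂ := by
      intro I₁ h₁ I₂ h₂ h
      rw [← hEsd I₁ h₁, ← hEsd I₂ h₂, h]
    have hlam : IsLambdaFam p (↑b : Set F) (d i) l := by
      constructor
      · intro W hW t
        have hmem : W ∈ s.image sd := Finsupp.support_onFinset_subset hW
        obtain ⟨I, hI, rfl⟩ := Finset.mem_image.1 hmem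
        rw [hsd]
        simp only
        rw [Finsupp.subtypeDomain_apply]
        exact (hs I hI).2 ↑t
      · rw [hl, Finsupp.onFinset_sum hfs (fun W => by rw [zero_pow hp.ne_zero, mul_zero]),
          Finset.sum_image hsd_inj, heq]
        refine Finset.sum_congr rfl fun I hI => ?_
        have h1 : f (sd I) = y I := by
          rw [hf]
          simp only
          rw [hEsd I hI, if_pos hI]
        have h2 : ((sd I).prod fun t k => (↑t : F) ^ k) = mono I := by
          conv_rhs => rw [← hEsd I hI]
          simp only [mono]
          rw [Finsupp.prod_embDomain]
          rfl
        rw [h1, h2, hyp I hI]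
    have hvals := hD (↑b : Set F) hbD (Finset.finite_toSet b) hbind (d i) (hd i) l hlam
    refine ⟨s, fun I => y I, hs, ?_, ?_⟩
    · intro I hI
      have := hvals (sd I)
      rwa [hfl I hI] at this
    · rw [heq]
      exact Finset.sum_congr rfl fun I hI => by rw [hyp I hI]
  choose s e hs he heq using key
  set T : Finset (F →₀ ℕ) := Finset.univ.biUnion s with hT
  have hsT : ∀ i, s i ⊆ T := fun i => Finset.subset_biUnion_of_mem s (Finset.mem_univ i)
  set E : Fin n → (F →₀ ℕ) → F := fun i I => if I ∈ s i then e i I else 0 with hE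
  have hED : ∀ i I, E i I ∈ D := by
    intro i I
    rw [hE]
    simp only
    split
    · exact he i I (by assumption)
    · exact D.zero_mem
  have heqT : ∀ i, d i = ∑ I ∈ T, mono I * E i I ^ p := by
    intro i
    rw [heq i]
    have h1 : ∑ I ∈ s i, mono I * e i I ^ p = ∑ I ∈ s i, mono I * E i I ^ p := by
      refine Finset.sum_congr rfl fun I hI => ?_
      rw [hE]
      simp only
      rw [if_pos hI]
    rw [h1]
    refine Finset.sum_subset (hsT i) fun I _ hI => ?_
    rw [hE]
    simp only
    rw [if_neg hI, zero_pow hp.ne_zero, mul_zero]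
  have hTsupp : ∀ I ∈ T, ↑I.support ⊆ (↑b : Set F) ∧ ∀ t, I t < p := by
    intro I hI
    obtain ⟨i, _, hIi⟩ := Finset.mem_biUnion.1 hI
    exact hs i I hIi
  have hbig : (∑ I ∈ T, mono I * (∑ i, E i I * x i) ^ p) = 0 := by
    have h1 : ∀ I ∈ T, mono I * (∑ i, E i I * x i) ^ p
        = ∑ i, mono I * E i I ^ p * x i ^ p := by
      intro I _
      rw [sum_pow_char, Finset.mul_sum]
      exact Finset.sum_congr rfl fun i _ => by rw [mul_pow]; ring
    rw [Finset.sum_congr rfl h1, Finset.sum_comm]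
    have h2 : ∀ i, (∑ I ∈ T, mono I * E i I ^ p * x i ^ p) = d i * x i ^ p := by
      intro i
      rw [← Finset.sum_mul, ← heqT i]
    rw [Finset.sum_congr rfl fun i _ => h2 i]
    exact hrel
  have hzero := crux p (KpSF F p) (↑b : Set F) (fun z _ => pow_mem_KpSF p z) hindKp T hTsupp
    (fun I => (∑ i, E i I * x i) ^ p) (fun I _ => pow_mem_KpSF p _) hbig
  intro i
  rw [heqT i]
  refine Finset.sum_eq_zero fun I hI => ?_
  have h9 := hzero I hI
  have h10 : (∑ j, E j I * x j) = 0 := (pow_eq_zero_iff hp.ne_zero).1 h9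
  have h11 := hxind (fun j => E j I) (fun j => hED j I) h10 i
  rw [h11, zero_pow hp.ne_zero, mul_zero]


theorem mainCharP (C : Subfield F) : ∃ D : Subfield F, IsLambdaClosure p (↑C : Set F) D := by
  classical
  set S : Set (Subfield F) := {D | (↑C : Set F) ⊆ ↑D ∧ LClosed p D} with hS
  refine ⟨sInf S, ?_, ?_, ?_⟩
  · intro z hz
    rw [SetLike.mem_coe, Subfield.mem_sInf]
    intro D hD
    exact hD.1 hz
  · refine LClosed_sep p _ ?_
    intro b hb hfin hbind a ha l hl I
    rw [Subfield.mem_sInf]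
    intro D hD
    refine hD.2 b ?_ hfin hbind a (Subfield.mem_sInf.1 ha D hD) l hl I
    intro z hz
    have := hb hz
    rw [SetLike.mem_coe, Subfield.mem_sInf] at this
    exact this D hD
  · intro D' hC hsep
    exact sInf_le ⟨hC, sep_LClosed p D' hsep⟩

end Aux

end SepPaper
namespace SepPaper

/-- Theorem of Deveney–Mordeson.
For every field extension `F/C` there is a minimum element, with respect to inclusion,
of the set of subfields `D` of `F` with `C ⊆ D` and `F/D` separable. -/
theorem statement2 {F : Type*} [Field F] (p : ℕ) (hp : p = ringExpChar F)
    (C : Subfield F) :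
    ∃ D : Subfield F, IsLambdaClosure p (C : Set F) D := by
  classical
  have he : ExpChar F p := by rw [hp]; infer_instance
  cases he with
  | zero =>
    refine ⟨C, subset_rfl, ?_, fun D' hC _ => SetLike.coe_subset_coe.1 hC⟩
    intro n x hx hind dcoef hdc hrel
    simp only [pow_one] at hrel
    exact hind dcoef hdc hrel
  | prime hq =>
    haveI := Fact.mk hq
    exact mainCharP p C

end SepPaper
end

section
/- Let F be a field of characteristic exponent p, let b be a well-ordered subset of F that is p-independent in F, and let a, a₁, a₂ ∈ F^(p)(b). Then: (i) a lies in the subring of F generated by b together with the p-th powers of elements of the subring 𝔽[λ^b(a)] generated by the prime field and the elements λ^b_I(a); (ii) λ^b_I(a₁ + a₂) = λ^b_I(a₁) + λ^b_I(a₂) for every I ∈ p^{[|b|]}; (iii) every λ^b_I(a₁·a₂) lies in the subring 𝔽[b ∪ λ^b(a₁) ∪ λ^b(a₂)] of F generated by the prime field together with b, λ^b(a₁), and λ^b(a₂). -/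
open scoped Classical

namespace SepPaper
variable {F : Type*} [Field F]

def mon {B : Set F} (I : ↥B →₀ ℕ) : F := I.prod fun t k => (t : F) ^ k

variable {B : Set F} {p : ℕ}

lemma mon_zero : mon (0 : ↥B →₀ ℕ) = 1 := Finsupp.prod_zero_index

lemma mon_add (I J : ↥B →₀ ℕ) : mon (I + J) = mon I * mon J :=
  Finsupp.prod_add_index' (fun a => pow_zero _) (fun a b₁ b₂ => pow_add _ _ _)

lemma mon_single (t : ↥B) (k : ℕ) : mon (Finsupp.single t k) = (t : F) ^ k :=
  Finsupp.prod_single_index (pow_zero _)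

lemma mon_eq_prod {I : ↥B →₀ ℕ} {s : Finset ↥B} (h : I.support ⊆ s) :
    mon I = ∏ t ∈ s, (t : F) ^ I t :=
  Finsupp.prod_of_support_subset I h _ (fun t _ => pow_zero _)

lemma mon_mem {S : Type*} [SetLike S F] [SubmonoidClass S F] (s : S) {I : ↥B →₀ ℕ}
    (h : ∀ t ∈ I.support, (t : F) ∈ s) : mon I ∈ s :=
  prod_mem fun t ht => pow_mem (h t ht) _

noncomputable def modP (p : ℕ) {B : Set F} (I : ↥B →₀ ℕ) : ↥B →₀ ℕ := I.mapRange (· % p) (Nat.zero_mod p)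
noncomputable def divP (p : ℕ) {B : Set F} (I : ↥B →₀ ℕ) : ↥B →₀ ℕ := I.mapRange (· / p) (Nat.zero_div p)

lemma modP_apply (I : ↥B →₀ ℕ) (t : ↥B) : modP p I t = I t % p := rfl
lemma divP_apply (I : ↥B →₀ ℕ) (t : ↥B) : divP p I t = I t / p := rfl

lemma mon_modP_divP (I : ↥B →₀ ℕ) : mon I = mon (modP p I) * (mon (divP p I)) ^ p := by
  have h1 : (modP p I).support ⊆ I.support := Finsupp.support_mapRange
  have h2 : (divP p I).support ⊆ I.support := Finsupp.support_mapRange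
  rw [mon_eq_prod (le_refl I.support), mon_eq_prod h1, mon_eq_prod h2,
    ← Finset.prod_pow, ← Finset.prod_mul_distrib]
  refine Finset.prod_congr rfl fun t _ => ?_
  rw [modP_apply, divP_apply, ← pow_mul, ← pow_add, Nat.mod_add_div']

lemma isLambdaFam_zero : IsLambdaFam p B 0 0 :=
  ⟨by simp, by rw [Finsupp.sum_zero_index]⟩

variable [ExpChar F p]

lemma p_ne_zero (_h : ExpChar F p) : p ≠ 0 := (expChar_pos F p).ne'

lemma neg_pow_p (y : F) : (-y) ^ p = -(y ^ p) := by
  have h := sub_pow_expChar (0 : F) y (p := p)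
  rw [zero_sub] at h
  rw [h, zero_pow (expChar_pos F p).ne', zero_sub]

lemma isLambdaFam_add {a₁ a₂ : F} {l₁ l₂ : (↥B →₀ ℕ) →₀ F}
    (h₁ : IsLambdaFam p B a₁ l₁) (h₂ : IsLambdaFam p B a₂ l₂) :
    IsLambdaFam p B (a₁ + a₂) (l₁ + l₂) := by
  constructor
  · intro I hI t
    rcases Finset.mem_union.1 (Finsupp.support_add hI) with h | h
    · exact h₁.1 I h t
    · exact h₂.1 I h t
  · rw [h₁.2, h₂.2]
    exact (Finsupp.sum_add_index'
      (fun I => by rw [zero_pow (p_ne_zero ‹ExpChar F p›), mul_zero])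
      (fun I y₁ y₂ => by rw [add_pow_expChar, mul_add])).symm

lemma isLambdaFam_neg {a : F} {l : (↥B →₀ ℕ) →₀ F} (h : IsLambdaFam p B a l) :
    IsLambdaFam p B (-a) (-l) := by
  constructor
  · intro I hI t
    exact h.1 I (by simpa using hI) t
  · rw [h.2]
    rw [show (-l) = l.mapRange Neg.neg neg_zero from rfl]
    rw [Finsupp.sum_mapRange_index (fun I => by rw [zero_pow (p_ne_zero ‹ExpChar F p›), mul_zero])]
    rw [← Finsupp.sum_neg]
    refine Finsupp.sum_congr fun I _ => ?_
    rw [neg_pow_p, mul_neg]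

lemma isLambdaFam_single {K : ↥B →₀ ℕ} (hK : ∀ t, K t < p) (c : F) :
    IsLambdaFam p B (mon K * c ^ p) (Finsupp.single K c) := by
  constructor
  · intro I hI t
    have := Finsupp.support_single_subset hI
    rw [Finset.mem_singleton] at this
    subst this; exact hK t
  · rw [Finsupp.sum_single_index]
    · rfl
    · rw [zero_pow (p_ne_zero ‹ExpChar F p›), mul_zero]

end SepPaper

namespace SepPaper
variable {F : Type*} [Field F] {B : Set F} {p : ℕ}

def goodSet (p : ℕ) (B : Set F) (R : Subring F) : Set F :=
  {x | ∃ l, IsLambdaFam p B x l ∧ ∀ I, l I ∈ R}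

variable {R : Subring F} [ExpChar F p]

lemma zero_mem_goodSet : (0 : F) ∈ goodSet p B R :=
  ⟨0, isLambdaFam_zero, fun I => by
    rw [Finsupp.coe_zero, Pi.zero_apply]; exact zero_mem R⟩

lemma add_mem_goodSet {x y : F} (hx : x ∈ goodSet p B R) (hy : y ∈ goodSet p B R) :
    x + y ∈ goodSet p B R := by
  obtain ⟨l₁, h₁, m₁⟩ := hx
  obtain ⟨l₂, h₂, m₂⟩ := hy
  exact ⟨l₁ + l₂, isLambdaFam_add h₁ h₂, fun I => by
    rw [Finsupp.add_apply]; exact add_mem (m₁ I) (m₂ I)⟩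

lemma neg_mem_goodSet {x : F} (hx : x ∈ goodSet p B R) : -x ∈ goodSet p B R := by
  obtain ⟨l, h, m⟩ := hx
  exact ⟨-l, isLambdaFam_neg h, fun I => by
    rw [Finsupp.neg_apply]; exact neg_mem (m I)⟩

lemma single_mem_goodSet {K : ↥B →₀ ℕ} (hK : ∀ t, K t < p) {c : F} (hc : c ∈ R) :
    mon K * c ^ p ∈ goodSet p B R :=
  ⟨Finsupp.single K c, isLambdaFam_single hK c, fun I => by
    rw [Finsupp.single_apply]
    split <;> [exact hc; exact zero_mem R]⟩

lemma sum_mem_goodSet {ι : Type*} {s : Finset ι} {f : ι → F}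
    (h : ∀ i ∈ s, f i ∈ goodSet p B R) : (∑ i ∈ s, f i) ∈ goodSet p B R :=
  Finset.sum_induction f (· ∈ goodSet p B R) (fun _ _ => add_mem_goodSet)
    zero_mem_goodSet h

lemma term_mem_goodSet (hBR : ∀ t : ↥B, (t : F) ∈ R) {I J : ↥B →₀ ℕ} {c d : F}
    (hc : c ∈ R) (hd : d ∈ R) :
    (mon I * c ^ p) * (mon J * d ^ p) ∈ goodSet p B R := by
  have h := mon_modP_divP (p := p) (I + J)
  have key : mon (modP p (I + J)) * (mon (divP p (I + J)) * (c * d)) ^ p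
      = (mon I * c ^ p) * (mon J * d ^ p) := by
    have h2 : mon (modP p (I+J)) * (mon (divP p (I+J)) * (c*d))^p
        = (mon (modP p (I+J)) * (mon (divP p (I+J)))^p) * (c*d)^p := by
      rw [mul_pow]; ring
    rw [h2, ← h, mon_add, mul_pow]; ring
  rw [← key]
  refine single_mem_goodSet (fun t => Nat.mod_lt _ (expChar_pos F p)) ?_
  exact mul_mem (mon_mem R.toSubmonoid fun t _ => hBR t) (mul_mem hc hd)

lemma mul_mem_goodSet (hBR : ∀ t : ↥B, (t : F) ∈ R) {x y : F}
    (hx : x ∈ goodSet p B R) (hy : y ∈ goodSet p B R) : x * y ∈ goodSet p B R := by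
  obtain ⟨l₁, h₁, m₁⟩ := hx
  obtain ⟨l₂, h₂, m₂⟩ := hy
  rw [h₁.2, h₂.2, Finsupp.sum, Finsupp.sum, Finset.sum_mul_sum]
  refine sum_mem_goodSet fun I hI => sum_mem_goodSet fun J hJ => ?_
  exact term_mem_goodSet hBR (m₁ I) (m₂ J)

lemma one_mem_goodSet : (1 : F) ∈ goodSet p B R := by
  have := single_mem_goodSet (B := B) (K := 0) (fun t => expChar_pos F p) (one_mem R)
  simpa [mon_zero] using this

lemma pow_mem_goodSet (hBR : ∀ t : ↥B, (t : F) ∈ R) {x : F}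
    (hx : x ∈ goodSet p B R) (n : ℕ) : x ^ n ∈ goodSet p B R := by
  induction n with
  | zero => simpa using one_mem_goodSet
  | succ n ih => rw [pow_succ]; exact mul_mem_goodSet hBR ih hx

lemma pPow_mem_goodSet (x : F) : x ^ p ∈ goodSet p B (⊤ : Subring F) := by
  have := single_mem_goodSet (B := B) (R := ⊤) (K := 0) (fun t => expChar_pos F p)
    (c := x) trivial
  simpa [mon_zero] using this

end SepPaper

namespace SepPaper
variable {F : Type*} [Field F] {B : Set F} {p : ℕ} [ExpChar F p]

lemma mem_goodSet_of_mem_B {b : F} (hb : b ∈ B) :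
    b ∈ goodSet p B (⊤ : Subring F) := by
  rcases eq_or_lt_of_le (Nat.one_le_iff_ne_zero.2 (expChar_pos F p).ne') with h1 | hp1
  · have := single_mem_goodSet (R := (⊤ : Subring F)) (K := (0 : ↥B →₀ ℕ))
      (fun t => expChar_pos F p) (c := b) (Subring.mem_top b)
    simpa [mon_zero, ← h1] using this
  have hK : ∀ t : ↥B, (Finsupp.single (⟨b, hb⟩ : ↥B) 1) t < p := by
    intro t
    rw [Finsupp.single_apply]
    split <;> omega
  have := single_mem_goodSet (R := (⊤ : Subring F)) hK (c := 1) (Subring.mem_top 1)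
  simpa [mon_single] using this

lemma inv_mem_goodSet {x : F} (hx : x ∈ goodSet p B (⊤ : Subring F)) :
    x⁻¹ ∈ goodSet p B (⊤ : Subring F) := by
  by_cases hx0 : x = 0
  · rw [hx0, inv_zero]; exact zero_mem_goodSet
  · have h1 : x ^ p = x ^ (p - 1) * x := by
      rw [← pow_succ, Nat.sub_add_cancel (expChar_pos F p)]
    have key : x ^ (p - 1) * (x⁻¹) ^ p = x⁻¹ := by
      rw [inv_pow, h1, mul_inv, ← mul_assoc,
        mul_inv_cancel₀ (pow_ne_zero _ hx0), one_mul]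
    rw [← key]
    exact mul_mem_goodSet (fun t => Subring.mem_top _)
      (pow_mem_goodSet (fun t => Subring.mem_top _) hx (p - 1)) (pPow_mem_goodSet x⁻¹)

/-- The set of elements representable by a lambda family, as a subfield. -/
noncomputable def goodField (p : ℕ) (B : Set F) [ExpChar F p] : Subfield F where
  carrier := goodSet p B (⊤ : Subring F)
  zero_mem' := zero_mem_goodSet
  one_mem' := one_mem_goodSet
  add_mem' := add_mem_goodSet
  neg_mem' := neg_mem_goodSet
  mul_mem' := mul_mem_goodSet (fun t => Subring.mem_top _)
  inv_mem' := fun x => inv_mem_goodSet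

lemma exists_isLambdaFam_of_mem_pSpan {a : F} (ha : a ∈ pSpan p ∅ B) :
    ∃ l, IsLambdaFam p B a l := by
  have hle : pSpan p ∅ B ≤ goodField p B := by
    rw [pSpan, Subfield.closure_le]
    rintro x ((⟨y, rfl⟩ | hx) | hx)
    · exact pPow_mem_goodSet y
    · exact absurd hx (Set.notMem_empty _)
    · exact mem_goodSet_of_mem_B hx
  obtain ⟨l, hl, -⟩ := hle ha
  exact ⟨l, hl⟩

end SepPaper

namespace SepPaper
variable {F : Type*} [Field F] {p : ℕ}

open Polynomial in
lemma pow_linIndep (hq : p.Prime) [CharP F p] (K : Subfield F) {b : F}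
    (hbp : b ^ p ∈ K) (hb : b ∉ K) (c : ℕ → F) (hc : ∀ k, k < p → c k ∈ K)
    (hsum : ∑ k ∈ Finset.range p, c k * b ^ k = 0) : ∀ k, k < p → c k = 0 := by
  haveI : Fact p.Prime := ⟨hq⟩
  have hmapC : (algebraMap K F) (⟨b ^ p, hbp⟩ : K) = b ^ p := rfl
  have haev : Polynomial.aeval b ((X : K[X]) ^ p - C (⟨b ^ p, hbp⟩ : K)) = 0 := by
    rw [map_sub, map_pow, aeval_X, aeval_C, hmapC, sub_self]
  have hint : IsIntegral K b :=
    ⟨(X : K[X]) ^ p - C (⟨b ^ p, hbp⟩ : K), monic_X_pow_sub_C _ hq.ne_zero, haev⟩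
  have hmon : (minpoly K b).Monic := minpoly.monic hint
  have hd1 : 0 < (minpoly K b).natDegree := minpoly.natDegree_pos hint
  set d := (minpoly K b).natDegree with hd
  have hdvd : (minpoly K b).map (algebraMap K F) ∣ ((X : F[X]) - C b) ^ p := by
    have h2 := Polynomial.map_dvd (algebraMap K F) (minpoly.dvd K b haev)
    rw [Polynomial.map_sub, Polynomial.map_pow, Polynomial.map_X, Polynomial.map_C,
      hmapC] at h2
    have h3 : ((X : F[X]) - C b) ^ p = X ^ p - C (b ^ p) := by
      rw [sub_pow_char, ← C_pow]
    rwa [← h3] at h2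
  obtain ⟨i, hip, hassoc⟩ := (dvd_prime_pow (prime_X_sub_C b) p).1 hdvd
  have heq : (minpoly K b).map (algebraMap K F) = ((X : F[X]) - C b) ^ i :=
    Polynomial.eq_of_monic_of_associated (hmon.map _) ((monic_X_sub_C b).pow i) hassoc
  have hdi : i = d := by
    have h4 := congrArg Polynomial.natDegree heq
    rwa [hmon.natDegree_map, Polynomial.natDegree_pow, Polynomial.natDegree_X_sub_C,
      mul_one, ← hd, eq_comm] at h4
  rw [hdi] at heq
  have hpd : p ≤ d := by
    by_contra hlt
    push_neg at hlt
    have heq' : (minpoly K b).map (algebraMap K F) = ((X : F[X]) + C (-b)) ^ d := by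
      rw [heq, sub_eq_add_neg, ← C_neg]
    have h8 : (algebraMap K F) ((minpoly K b).coeff (d - 1)) = -((d : F) * b) := by
      rw [← Polynomial.coeff_map, heq', coeff_X_add_C_pow,
        show d - (d - 1) = 1 by omega, pow_one,
        Nat.choose_symm hd1, Nat.choose_one_right]
      ring
    have hdb : (d : F) * b ∈ K := by
      have h9 : (d : F) * b = -((algebraMap K F) ((minpoly K b).coeff (d - 1))) := by
        rw [h8]; ring
      rw [h9]
      exact neg_mem (SetLike.coe_mem _)
    have hdne : (d : F) ≠ 0 := by
      intro h0
      exact absurd ((CharP.cast_eq_zero_iff F p d).1 h0)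
        (Nat.not_dvd_of_pos_of_lt hd1 hlt)
    refine hb ?_
    have h9 : b = ((d : F))⁻¹ * ((d : F) * b) := by field_simp
    rw [h9]
    exact mul_mem (inv_mem (natCast_mem K d)) hdb
  classical
  intro k hk
  set cK : ℕ → K := fun j => if h : j < p then ⟨c j, hc j h⟩ else 0 with hcK
  set P : K[X] := ∑ j : Fin p, C (cK (j : ℕ)) * X ^ (j : ℕ) with hP
  have hdegP : P.degree < (p : WithBot ℕ) := by
    rw [hP]; exact degree_sum_fin_lt _
  have haevP : Polynomial.aeval b P = 0 := by
    have hterm : ∀ j : Fin p, Polynomial.aeval b (C (cK (j : ℕ)) * X ^ (j : ℕ))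
        = c (j : ℕ) * b ^ (j : ℕ) := by
      intro j
      rw [map_mul, map_pow, aeval_X, aeval_C]
      congr 1
      show ((cK (j : ℕ) : K) : F) = c (j : ℕ)
      rw [hcK]
      simp [j.isLt]
    rw [hP, map_sum, Finset.sum_congr rfl fun j _ => hterm j,
      Fin.sum_univ_eq_sum_range (fun j => c j * b ^ j) p]
    exact hsum
  have hP0 : P = 0 := by
    by_contra hne
    have hle := minpoly.degree_le_of_ne_zero K b hne haevP
    have hpm : (p : WithBot ℕ) ≤ (minpoly K b).degree := by
      rw [Polynomial.degree_eq_natDegree hmon.ne_zero, ← hd]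
      exact_mod_cast hpd
    exact absurd (lt_of_le_of_lt hle hdegP) (not_lt.2 hpm)
  have hck : cK k = 0 := by
    have hco := congrArg (fun q : K[X] => q.coeff k) hP0
    simp only [hP, Polynomial.finset_sum_coeff, Polynomial.coeff_C_mul,
      Polynomial.coeff_X_pow, Polynomial.coeff_zero] at hco
    rw [Fin.sum_univ_eq_sum_range (fun j => cK j * if k = j then 1 else 0) p] at hco
    simp only [mul_ite, mul_one, mul_zero] at hco
    rwa [Finset.sum_ite_eq (Finset.range p) k cK,
      if_pos (Finset.mem_range.2 hk)] at hco
  have hcc : c k = (cK k : F) := by rw [hcK]; simp [hk]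
  rw [hcc, hck]
  rfl

end SepPaper

namespace SepPaper
variable {F : Type*} [Field F] {B : Set F} {p : ℕ}

lemma erase_inj_aux {b : ↥B} {I I' : ↥B →₀ ℕ} (hk : I b = I' b)
    (h : I.erase b = I'.erase b) : I = I' := by
  ext t
  by_cases ht : t = b
  · subst ht; exact hk
  · rw [← Finsupp.erase_ne ht, ← Finsupp.erase_ne (f := I') ht, h]

lemma key_aux (hq : p.Prime) [CharP F p] (hB : PIndep p ∅ B) :
    ∀ (n : ℕ) (l : (↥B →₀ ℕ) →₀ F), (∀ I ∈ l.support, ∀ t, I t < p) →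
      (l.support.biUnion Finsupp.support).card ≤ n →
      (l.sum fun I y => mon I * y ^ p) = 0 → l = 0 := by
  haveI : ExpChar F p := ExpChar.prime hq
  intro n
  induction n with
  | zero =>
    intro l hlt hcard hsum
    have hT : l.support.biUnion Finsupp.support = ∅ := Finset.card_eq_zero.1 (Nat.le_zero.1 hcard)
    have hsub : l.support ⊆ {0} := by
      intro I hI
      rw [Finset.mem_singleton]
      have : I.support = ∅ := Finset.eq_empty_of_forall_notMem fun t ht =>
        (Finset.notMem_empty t) (hT ▸ Finset.mem_biUnion.2 ⟨I, hI, ht⟩)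
      exact Finsupp.support_eq_empty.1 this
    rcases Finset.subset_singleton_iff.1 hsub with h | h
    · exact Finsupp.support_eq_empty.1 h
    · exfalso
      rw [Finsupp.sum, h, Finset.sum_singleton, mon_zero, one_mul] at hsum
      have : l 0 = 0 := pow_eq_zero_iff hq.ne_zero |>.1 hsum
      have h0 : (0 : ↥B →₀ ℕ) ∈ l.support := h ▸ Finset.mem_singleton_self _
      exact (Finsupp.mem_support_iff.1 h0) this
  | succ n ih =>
    intro l hlt hcard hsum
    set T := l.support.biUnion Finsupp.support with hT
    by_cases hTn : T.card ≤ n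
    · exact ih l hlt hTn hsum
    have hTne : T.Nonempty := by
      rw [← Finset.card_pos]; omega
    obtain ⟨b, hbT⟩ := hTne
    -- slices
    set lk : ℕ → ((↥B →₀ ℕ) →₀ F) := fun k =>
      ∑ I ∈ l.support.filter (fun I => I b = k), Finsupp.single (I.erase b) (l I)
      with hlk
    have hf0 : ∀ I : ↥B →₀ ℕ, mon I * (0 : F) ^ p = 0 := fun I => by
      rw [zero_pow hq.ne_zero, mul_zero]
    -- value of lk at erased indices
    have hlkval : ∀ I ∈ l.support, (lk (I b)) (I.erase b) = l I := by
      intro I hI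
      rw [hlk, Finsupp.finset_sum_apply]
      have hmain : ∀ I' ∈ l.support.filter (fun I' => I' b = I b), I' ≠ I →
          (Finsupp.single (I'.erase b) (l I')) (I.erase b) = 0 := by
        intro I' hI' hne
        rw [Finsupp.single_apply, if_neg]
        intro heq
        exact hne (erase_inj_aux (by rw [(Finset.mem_filter.1 hI').2]) heq)
      have hmem : I ∈ l.support.filter (fun I' => I' b = I b) :=
        Finset.mem_filter.2 ⟨hI, rfl⟩
      rw [Finset.sum_eq_single_of_mem I hmem hmain, Finsupp.single_apply, if_pos rfl]
    -- sum of each slice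
    have hSk : ∀ k, (lk k).sum (fun I y => mon I * y ^ p)
        = ∑ I ∈ l.support.filter (fun I => I b = k), mon (I.erase b) * (l I) ^ p := by
      intro k
      rw [hlk, ← Finsupp.sum_finset_sum_index hf0
        (fun I y₁ y₂ => by rw [add_pow_expChar, mul_add])]
      refine Finset.sum_congr rfl fun I hI => ?_
      rw [Finsupp.sum_single_index (hf0 _)]
    -- main decomposition
    have hdecomp : (l.sum fun I y => mon I * y ^ p)
        = ∑ k ∈ Finset.range p, (b : F) ^ k *
            ((lk k).sum fun I y => mon I * y ^ p) := by
      rw [Finsupp.sum]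
      rw [← Finset.sum_fiberwise_of_maps_to (g := fun I : ↥B →₀ ℕ => I b)
        (t := Finset.range p) (fun I hI => Finset.mem_range.2 (hlt I hI b))]
      refine Finset.sum_congr rfl fun k _ => ?_
      rw [hSk, Finset.mul_sum]
      refine Finset.sum_congr rfl fun I hI => ?_
      have hIb : I b = k := (Finset.mem_filter.1 hI).2
      have hmonI : mon I = (b : F) ^ k * mon (I.erase b) := by
        conv_lhs => rw [← Finsupp.single_add_erase b I]
        rw [mon_add, mon_single, hIb]
      rw [hmonI]; ring
    -- each slice sum lies in the span over B \ {b}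
    set K : Subfield F := pSpan p ∅ (B \ {(b : F)}) with hK
    have hmemK : ∀ k, ((lk k).sum fun I y => mon I * y ^ p) ∈ K := by
      intro k
      rw [hSk]
      refine Subfield.sum_mem _ fun I hI => ?_
      refine Subfield.mul_mem _ ?_ ?_
      · refine mon_mem K.toSubmonoid fun t ht => ?_
        refine Subfield.subset_closure (Or.inr ⟨t.2, ?_⟩)
        rw [Finsupp.support_erase, Finset.mem_erase] at ht
        exact fun hc => ht.1 (Subtype.coe_injective hc)
      · exact Subfield.subset_closure (Or.inl (Or.inl ⟨l I, rfl⟩))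
    -- b is not in K and b^p is
    have hbB : (b : F) ∈ B := b.2
    have hbK : (b : F) ∉ K := hB (b : F) hbB
    have hbpK : (b : F) ^ p ∈ K := Subfield.subset_closure (Or.inl (Or.inl ⟨(b : F), rfl⟩))
    -- all slice sums vanish
    have hvanish : ∀ k, k < p → ((lk k).sum fun I y => mon I * y ^ p) = 0 := by
      refine pow_linIndep hq K hbpK hbK _ (fun k _ => hmemK k) ?_
      rw [← hsum, hdecomp]
      exact Finset.sum_congr rfl fun k _ => mul_comm _ _
    -- apply induction hypothesis to each slice
    have hlk0 : ∀ k, k < p → lk k = 0 := by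
      intro k hk
      refine ih (lk k) ?_ ?_ (hvanish k hk)
      · intro J hJ t
        have hJ' := Finsupp.support_finset_sum hJ
        obtain ⟨I, hI, hJI⟩ := Finset.mem_biUnion.1 hJ'
        have := Finsupp.support_single_subset hJI
        rw [Finset.mem_singleton] at this
        subst this
        by_cases ht : t = b
        · subst ht; rw [Finsupp.erase_same]; exact hq.pos
        · rw [Finsupp.erase_ne ht]
          exact hlt I (Finset.mem_filter.1 hI).1 t
      · have hsub : (lk k).support.biUnion Finsupp.support ⊆ T.erase b := by
          intro t ht
          obtain ⟨J, hJ, htJ⟩ := Finset.mem_biUnion.1 ht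
          have hJ' := Finsupp.support_finset_sum hJ
          obtain ⟨I, hI, hJI⟩ := Finset.mem_biUnion.1 hJ'
          have := Finsupp.support_single_subset hJI
          rw [Finset.mem_singleton] at this
          subst this
          rw [Finsupp.support_erase, Finset.mem_erase] at htJ
          refine Finset.mem_erase.2 ⟨htJ.1, ?_⟩
          exact hT ▸ Finset.mem_biUnion.2 ⟨I, (Finset.mem_filter.1 hI).1, htJ.2⟩
        calc ((lk k).support.biUnion Finsupp.support).card
            ≤ (T.erase b).card := Finset.card_le_card hsub
          _ = T.card - 1 := Finset.card_erase_of_mem hbT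
          _ ≤ n := by omega
    -- conclude l = 0
    ext I
    rw [Finsupp.coe_zero, Pi.zero_apply]
    by_contra hne
    have hI : I ∈ l.support := Finsupp.mem_support_iff.2 hne
    have hIb : I b < p := hlt I hI b
    have := hlkval I hI
    rw [hlk0 (I b) hIb] at this
    rw [Finsupp.coe_zero, Pi.zero_apply] at this
    exact hne this.symm

end SepPaper

namespace SepPaper
variable {F : Type*} [Field F] {B : Set F} {p : ℕ}

lemma isLambdaFam_one_eq {a : F} {l : (↥B →₀ ℕ) →₀ F} (h : IsLambdaFam 1 B a l) :
    l = Finsupp.single 0 a := by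
  have hsub : l.support ⊆ {0} := fun I hI => Finset.mem_singleton.2
    (Finsupp.ext fun t => Nat.lt_one_iff.1 (h.1 I hI t))
  have ha : a = l 0 := by
    rcases Finset.subset_singleton_iff.1 hsub with h0 | h0
    · have hl0 : l = 0 := Finsupp.support_eq_empty.1 h0
      rw [h.2, hl0, Finsupp.sum_zero_index]
      simp
    · rw [h.2, Finsupp.sum, h0, Finset.sum_singleton,
        show ((0 : ↥B →₀ ℕ).prod fun t k => (t : F) ^ k) = 1 from mon_zero,
        one_mul, pow_one]
  exact Finsupp.eq_single_iff.2 ⟨hsub, ha.symm⟩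

lemma isLambdaFam_one_exists (a : F) : IsLambdaFam 1 B a (Finsupp.single 0 a) := by
  constructor
  · intro I hI t
    have := Finsupp.support_single_subset hI
    rw [Finset.mem_singleton] at this
    subst this
    simp
  · rw [Finsupp.sum_single_index, show ((0 : ↥B →₀ ℕ).prod fun t k => (t : F) ^ k) = 1
      from mon_zero, one_mul, pow_one]
    rw [show ((0 : ↥B →₀ ℕ).prod fun t k => (t : F) ^ k) = 1 from mon_zero, one_mul,
      pow_one]

lemma fam_unique (hE : ExpChar F p) (hB : PIndep p ∅ B) {a : F}
    {l l' : (↥B →₀ ℕ) →₀ F} (h : IsLambdaFam p B a l) (h' : IsLambdaFam p B a l') :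
    l = l' := by
  cases hE with
  | zero => rw [isLambdaFam_one_eq h, isLambdaFam_one_eq h']
  | prime hq =>
    haveI : ExpChar F p := ExpChar.prime hq
    have hdiff : IsLambdaFam p B (a + -a) (l + -l') :=
      isLambdaFam_add h (isLambdaFam_neg h')
    rw [add_neg_cancel] at hdiff
    have h0 : l + -l' = 0 := by
      refine key_aux hq hB ((l + -l').support.biUnion Finsupp.support).card (l + -l')
        hdiff.1 le_rfl ?_
      exact hdiff.2.symm
    have h1 : l - l' = 0 := by rwa [sub_eq_add_neg]
    exact sub_eq_zero.1 h1

lemma exists_fam (hE : ExpChar F p) {a : F} (ha : a ∈ pSpan p ∅ B) :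
    ∃ l, IsLambdaFam p B a l := by
  haveI := hE
  exact exists_isLambdaFam_of_mem_pSpan ha

lemma lambdaFam_eq (hE : ExpChar F p) (hB : PIndep p ∅ B) {a : F}
    {l : (↥B →₀ ℕ) →₀ F} (h : IsLambdaFam p B a l) : lambdaFam p B a = ⇑l := by
  have hex : ∃ l', IsLambdaFam p B a l' := ⟨l, h⟩
  rw [lambdaFam, dif_pos hex]
  exact congrArg _ (fam_unique hE hB hex.choose_spec h)

end SepPaper


namespace SepPaper

/-- Lemma `p-algebra`.
Let `F` be a field of characteristic exponent `p`, `B` a subset of `F` that is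
`p`-independent in `F`, and `a, a₁, a₂ ∈ F^(p)(B)`.  Then:
(i) `a` lies in the subring of `F` generated by `B` together with the `p`-th powers of
elements of the subring `𝔽[λ^B(a)]` generated by the prime field and the values
`λ^B_I(a)`; (ii) `λ^B_I(a₁ + a₂) = λ^B_I(a₁) + λ^B_I(a₂)` for every multi-index `I`
with entries `< p`; (iii) every `λ^B_I(a₁·a₂)` lies in the subring generated by the
prime field together with `B`, `λ^B(a₁)` and `λ^B(a₂)`. -/
theorem statement4 {F : Type*} [Field F] (p : ℕ) (hp : p = ringExpChar F)
    (B : Set F) (hB : PIndep p ∅ B) (a a₁ a₂ : F)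
    (ha : a ∈ pSpan p ∅ B) (ha₁ : a₁ ∈ pSpan p ∅ B) (ha₂ : a₂ ∈ pSpan p ∅ B) :
    a ∈ Subring.closure
        (B ∪ pPow p ↑(Subring.closure (((⊥ : Subfield F) : Set F) ∪ lambdaVals p B a))) ∧
    (∀ I : ↥B →₀ ℕ, (∀ t, I t < p) →
      lambdaFam p B (a₁ + a₂) I = lambdaFam p B a₁ I + lambdaFam p B a₂ I) ∧
    lambdaVals p B (a₁ * a₂) ⊆
      ↑(Subring.closure (((⊥ : Subfield F) : Set F) ∪ B ∪ lambdaVals p B a₁ ∪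
          lambdaVals p B a₂)) := by
  have hE : ExpChar F p := ringExpChar.of_eq hp.symm
  haveI := hE
  obtain ⟨l, hl⟩ := exists_fam hE ha
  obtain ⟨l₁, hl₁⟩ := exists_fam hE ha₁
  obtain ⟨l₂, hl₂⟩ := exists_fam hE ha₂
  refine ⟨?_, ?_, ?_⟩
  · -- (i)
    obtain ⟨V, hV⟩ : ∃ V, lambdaVals p B a = V := ⟨_, rfl⟩
    rw [hV, hl.2, Finsupp.sum]
    refine Subring.sum_mem _ fun I hI => Subring.mul_mem _ ?_ ?_
    · exact mon_mem _ fun t _ => Subring.subset_closure (Or.inl t.2)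
    · have hv0 : l I ∈ lambdaVals p B a :=
        ⟨I, hl.1 I hI, by rw [lambdaFam_eq hE hB hl]⟩
      have hv : l I ∈ V := hV ▸ hv0
      have hmem : l I ∈ Subring.closure (((⊥ : Subfield F) : Set F) ∪ V) :=
        Subring.subset_closure (Or.inr hv)
      exact Subring.subset_closure (Or.inr ⟨l I, hmem, rfl⟩)
  · -- (ii)
    intro I _
    have hadd : IsLambdaFam p B (a₁ + a₂) (l₁ + l₂) := isLambdaFam_add hl₁ hl₂
    rw [lambdaFam_eq hE hB hadd, lambdaFam_eq hE hB hl₁, lambdaFam_eq hE hB hl₂,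
      Finsupp.add_apply]
  · -- (iii)
    set R : Subring F := Subring.closure (((⊥ : Subfield F) : Set F) ∪ B ∪
      lambdaVals p B a₁ ∪ lambdaVals p B a₂) with hR
    have hBR : ∀ t : ↥B, (t : F) ∈ R :=
      fun t => Subring.subset_closure (Or.inl (Or.inl (Or.inr t.2)))
    have h₁g : a₁ ∈ goodSet p B R := by
      refine ⟨l₁, hl₁, fun I => ?_⟩
      by_cases hI : I ∈ l₁.support
      · exact Subring.subset_closure (Or.inl (Or.inr
          ⟨I, hl₁.1 I hI, by rw [lambdaFam_eq hE hB hl₁]⟩))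
      · rw [Finsupp.notMem_support_iff.1 hI]; exact zero_mem R
    have h₂g : a₂ ∈ goodSet p B R := by
      refine ⟨l₂, hl₂, fun I => ?_⟩
      by_cases hI : I ∈ l₂.support
      · exact Subring.subset_closure (Or.inr
          ⟨I, hl₂.1 I hI, by rw [lambdaFam_eq hE hB hl₂]⟩)
      · rw [Finsupp.notMem_support_iff.1 hI]; exact zero_mem R
    obtain ⟨l₃, hl₃, hmem⟩ := mul_mem_goodSet hBR h₁g h₂g
    rintro y ⟨I, hIlt, rfl⟩
    rw [lambdaFam_eq hE hB hl₃]
    exact hmem I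

end SepPaper
end
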